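/- arXiv:1809.07747 — 8 statements merged into one kernel-verified Lean document; each statement's English description precedes it below -/
import Mathlib

section
/- If v : Finset N → ℝ is superadditive (and nonnegative) and w is a truncation of v at a minimal set S (w(S) = 0, w(T) = v(T) for T ≠ S), then w is superadditive. -/
open Finset

/-- A characteristic function is monotone if larger coalitions get at least as much. -/
def MonotoneCF {n : ℕ} (v : Finset (Fin n) → ℝ) : Prop :=
  ∀ S T : Finset (Fin n), S ⊆ T → v S ≤ v T

/-- A characteristic function is superadditive. -/
def SuperadditiveCF {n : ℕ} (v : Finset (Fin n) → ℝ) : Prop :=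
  ∀ S T : Finset (Fin n), Disjoint S T → v S + v T ≤ v (S ∪ T)

/-- The allocation to player `i` determined by matrix `A` applied to `v`. -/
noncomputable def alloc {n : ℕ} (A : Fin n → Finset (Fin n) → ℝ)
    (i : Fin n) (v : Finset (Fin n) → ℝ) : ℝ :=
  ∑ S : Finset (Fin n), A i S * v S

/-- Minimal marginal contribution of player `i` in the game `v`. -/
noncomputable def margMin {n : ℕ} (i : Fin n) (v : Finset (Fin n) → ℝ) : ℝ :=
  ((Finset.univ.filter (fun S : Finset (Fin n) => i ∉ S)).image
      (fun S => v (insert i S) - v S)).min'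
    (Finset.Nonempty.image ⟨∅, by simp⟩ _)

/-- Maximal marginal contribution of player `i` in the game `v`. -/
noncomputable def margMax {n : ℕ} (i : Fin n) (v : Finset (Fin n) → ℝ) : ℝ :=
  ((Finset.univ.filter (fun S : Finset (Fin n) => i ∉ S)).image
      (fun S => v (insert i S) - v S)).max'
    (Finset.Nonempty.image ⟨∅, by simp⟩ _)

/-- An allocation is reasonable if every player receives between their minimal
and maximal marginal contribution, for every monotone game. -/
def Reasonable {n : ℕ} (A : Fin n → Finset (Fin n) → ℝ) : Prop :=
  ∀ v : Finset (Fin n) → ℝ, MonotoneCF v → ∀ i : Fin n,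
    margMin i v ≤ alloc A i v ∧ alloc A i v ≤ margMax i v

/-- An allocation is efficient if the total payout is `v N - v ∅` for every game. -/
def Efficient {n : ℕ} (A : Fin n → Finset (Fin n) → ℝ) : Prop :=
  ∀ v : Finset (Fin n) → ℝ, ∑ i : Fin n, alloc A i v = v Finset.univ - v ∅

/-- a truncation of a superadditive (nonnegative) characteristic
function at a minimal set is superadditive. -/
theorem truncation_superadditive {n : ℕ} (v : Finset (Fin n) → ℝ)
    (hpos : ∀ T : Finset (Fin n), 0 ≤ v T) (hsa : SuperadditiveCF v)
    (S : Finset (Fin n)) (hS : 0 < v S)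
    (hmin : ∀ T : Finset (Fin n), T ⊂ S → ¬ 0 < v T) :
    SuperadditiveCF (fun T => if T = S then 0 else v T) := by
  have hempty : v ∅ = 0 := by
    have := hsa ∅ ∅ (by simp)
    have := hpos ∅
    simp at *
    linarith
  have hw_le : ∀ T : Finset (Fin n), (if T = S then 0 else v T) ≤ v T := by
    intro T
    split
    · exact hpos T
    · exact le_refl _
  have hzero : ∀ T : Finset (Fin n), T ⊂ S → v T = 0 := fun T hT =>
    le_antisymm (not_lt.mp (hmin T hT)) (hpos T)
  intro A B hAB
  simp only
  by_cases hU : A ∪ B = S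
  · rw [if_pos hU]
    have hA : A ⊆ S := hU ▸ subset_union_left
    have hB : B ⊆ S := hU ▸ subset_union_right
    have wA : (if A = S then 0 else v A) ≤ 0 := by
      split
      · exact le_refl _
      · exact le_of_eq (hzero A (ssubset_of_ne_of_subset (by assumption) hA))
    have wB : (if B = S then 0 else v B) ≤ 0 := by
      by_cases hBS : B = S
      · rw [if_pos hBS]
      · rw [if_neg hBS]
        exact le_of_eq (hzero B (ssubset_of_ne_of_subset hBS hB))
    linarith
  · rw [if_neg hU]
    calc (if A = S then 0 else v A) + (if B = S then 0 else v B)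
        ≤ v A + v B := add_le_add (hw_le A) (hw_le B)
      _ ≤ v (A ∪ B) := hsa A B hAB
end

section
/- (Pairing of row elements) Let φ be a reasonable allocation with matrix A. Then for every player i and every set S ⊆ N with i ∉ S, A_{i,S} = -A_{i, S ∪ {i}}. -/
open Finset

/-- pairing of row elements: for a reasonable allocation,
`A_{i,S} = -A_{i,S ∪ {i}}` whenever `i ∉ S`. -/
theorem row_pairing {n : ℕ} (A : Fin n → Finset (Fin n) → ℝ)
    (hA : Reasonable A) :
    ∀ (i : Fin n) (S : Finset (Fin n)), i ∉ S → A i S = - A i (insert i S) := by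
  intro i S₀ hiS₀
  -- Key equation: for every T not containing i,
  -- ∑_{S ⊇ T, i ∉ S} (A i S + A i (insert i S)) = 0.
  have key : ∀ T : Finset (Fin n), i ∉ T →
      ∑ S ∈ univ.filter (fun S => i ∉ S ∧ T ⊆ S), (A i S + A i (insert i S)) = 0 := by
    intro T hiT
    set v : Finset (Fin n) → ℝ := fun X => if T ⊆ X then 1 else 0 with hv
    have hmono : MonotoneCF v := by
      intro X Y hXY
      simp only [hv]
      split_ifs with h1 h2
      · exact le_refl _
      · exact absurd (h1.trans hXY) h2
      · exact zero_le_one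
      · exact le_refl _
    have hmarg : ∀ X : Finset (Fin n), v (insert i X) = v X := by
      intro X
      simp only [hv, Finset.subset_insert_iff_of_notMem hiT]
    have hallzero : ∀ x ∈ ((Finset.univ.filter (fun S : Finset (Fin n) => i ∉ S)).image
        (fun S => v (insert i S) - v S)), x = 0 := by
      intro x hx
      obtain ⟨S, _, rfl⟩ := Finset.mem_image.mp hx
      rw [hmarg]; ring
    have hmin : margMin i v = 0 := hallzero _ (Finset.min'_mem _ _)
    have hmax : margMax i v = 0 := hallzero _ (Finset.max'_mem _ _)
    have halloc : alloc A i v = 0 := by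
      have h := hA v hmono i
      rw [hmin] at h; rw [hmax] at h
      linarith [h.1, h.2]
    have h1 : alloc A i v = ∑ X ∈ univ.filter (fun X => T ⊆ X), A i X := by
      unfold alloc
      rw [Finset.sum_filter]
      apply Finset.sum_congr rfl
      intro X _
      simp only [hv, mul_ite, mul_one, mul_zero]
    -- split the sum according to membership of i
    have h2 : ∑ X ∈ univ.filter (fun X => T ⊆ X), A i X
        = ∑ S ∈ univ.filter (fun S => i ∉ S ∧ T ⊆ S), A i S
          + ∑ S ∈ univ.filter (fun S => i ∈ S ∧ T ⊆ S), A i S := by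
      rw [← Finset.sum_filter_add_sum_filter_not (univ.filter (fun X => T ⊆ X))
        (fun X => i ∉ X) (A i)]
      congr 1
      · congr 1
        rw [Finset.filter_filter]
        apply Finset.filter_congr
        intro X _; tauto
      · congr 1
        rw [Finset.filter_filter]
        apply Finset.filter_congr
        intro X _; simp only [not_not]; tauto
    have h3 : ∑ S ∈ univ.filter (fun S => i ∈ S ∧ T ⊆ S), A i S
        = ∑ S ∈ univ.filter (fun S => i ∉ S ∧ T ⊆ S), A i (insert i S) := by
      apply Finset.sum_nbij' (fun X => X.erase i) (fun S => insert i S)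
      · intro X hX
        simp only [Finset.mem_filter] at hX ⊢
        refine ⟨Finset.mem_univ _, Finset.notMem_erase _ _, ?_⟩
        exact fun x hx => Finset.mem_erase.mpr ⟨fun h => hiT (h ▸ hx), hX.2.2 hx⟩
      · intro S hS
        simp only [Finset.mem_filter] at hS ⊢
        exact ⟨Finset.mem_univ _, Finset.mem_insert_self _ _,
          hS.2.2.trans (Finset.subset_insert _ _)⟩
      · intro X hX
        simp only [Finset.mem_filter] at hX
        exact Finset.insert_erase hX.2.1
      · intro S hS
        simp only [Finset.mem_filter] at hS
        exact Finset.erase_insert hS.2.1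
      · intro X hX
        simp only [Finset.mem_filter] at hX
        rw [Finset.insert_erase hX.2.1]
    rw [h1, h2, h3, ← Finset.sum_add_distrib] at halloc
    exact halloc
  -- downward induction on the size of the complement
  have main : ∀ m : ℕ, ∀ S : Finset (Fin n), i ∉ S → (univ \ S).card ≤ m →
      A i S + A i (insert i S) = 0 := by
    intro m
    induction m with
    | zero =>
      intro S hS hcard
      exfalso
      have : univ \ S = ∅ := Finset.card_eq_zero.mp (Nat.le_zero.mp hcard)
      have hi : i ∈ univ \ S := Finset.mem_sdiff.mpr ⟨Finset.mem_univ _, hS⟩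
      rw [this] at hi
      exact Finset.notMem_empty _ hi
    | succ m ih =>
      intro S hS hcard
      have hkey := key S hS
      have hmem : S ∈ univ.filter (fun S' => i ∉ S' ∧ S ⊆ S') := by
        simp [hS]
      rw [Finset.sum_eq_single_of_mem S hmem] at hkey
      · exact hkey
      · intro b hb hne
        simp only [Finset.mem_filter] at hb
        apply ih b hb.2.1
        have hssub : S ⊂ b := lt_of_le_of_ne hb.2.2 (Ne.symm hne)
        have h1 : (univ \ b).card < (univ \ S).card := by
          apply Finset.card_lt_card
          rw [Finset.ssubset_iff_of_subset (Finset.sdiff_subset_sdiff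
            (Finset.Subset.refl _) hssub.1)]
          obtain ⟨x, hxb, hxS⟩ := Finset.exists_of_ssubset hssub
          exact ⟨x, Finset.mem_sdiff.mpr ⟨Finset.mem_univ _, hxS⟩,
            fun h => (Finset.mem_sdiff.mp h).2 hxb⟩
        omega
  have := main (univ \ S₀).card S₀ hiS₀ (le_refl _)
  linarith
end

section
/- Let φ be a reasonable allocation with matrix A. Then for every player i and every nonempty S ⊆ N with i ∉ S, 0 ≤ A_{i, S ∪ {i}} ≤ 1 and -1 ≤ A_{i,S} ≤ 0. -/
open Finset

/-- for a reasonable allocation and nonempty `S` with `i ∉ S`,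
`0 ≤ A_{i,S∪{i}} ≤ 1` and `-1 ≤ A_{i,S} ≤ 0`. -/
theorem entry_sign_bounds {n : ℕ} (A : Fin n → Finset (Fin n) → ℝ)
    (hA : Reasonable A) :
    ∀ (i : Fin n) (S : Finset (Fin n)), i ∉ S → S ≠ ∅ →
      (0 ≤ A i (insert i S) ∧ A i (insert i S) ≤ 1) ∧
      (-1 ≤ A i S ∧ A i S ≤ 0) := by
  intro i S hiS hSne
  -- helper lemmas for bounding margMin / margMax
  have hmin : ∀ (v : Finset (Fin n) → ℝ) (c : ℝ),
      (∀ X : Finset (Fin n), i ∉ X → c ≤ v (insert i X) - v X) → c ≤ margMin i v := by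
    intro v c h
    apply Finset.le_min'
    intro y hy
    simp only [Finset.mem_image, Finset.mem_filter, Finset.mem_univ, true_and] at hy
    obtain ⟨X, hX, rfl⟩ := hy
    exact h X hX
  have hmax : ∀ (v : Finset (Fin n) → ℝ) (c : ℝ),
      (∀ X : Finset (Fin n), i ∉ X → v (insert i X) - v X ≤ c) → margMax i v ≤ c := by
    intro v c h
    apply Finset.max'_le
    intro y hy
    simp only [Finset.mem_image, Finset.mem_filter, Finset.mem_univ, true_and] at hy
    obtain ⟨X, hX, rfl⟩ := hy
    exact h X hX
  -- the base game : cardinality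
  set v0 : Finset (Fin n) → ℝ := fun X => (X.card : ℝ) with hv0
  have hv0mono : MonotoneCF v0 := by
    intro X Y h
    simp only [hv0]
    exact_mod_cast Finset.card_le_card h
  have hv0marg : ∀ X : Finset (Fin n), i ∉ X → v0 (insert i X) - v0 X = 1 := by
    intro X hX
    simp [hv0, Finset.card_insert_of_notMem hX]
  have hv0alloc : alloc A i v0 = 1 := by
    obtain ⟨h1, h2⟩ := hA v0 hv0mono i
    have hge : (1:ℝ) ≤ margMin i v0 := hmin v0 1 (fun X hX => (hv0marg X hX).ge)
    have hle : margMax i v0 ≤ 1 := hmax v0 1 (fun X hX => (hv0marg X hX).le)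
    linarith
  -- perturbed games
  have key : ∀ T : Finset (Fin n),
      alloc A i (fun X => v0 X + (if X = T then 1 else 0)) = 1 + A i T := by
    intro T
    have : alloc A i (fun X => v0 X + (if X = T then 1 else 0))
        = alloc A i v0 + ∑ X : Finset (Fin n), (if X = T then A i X else 0) := by
      unfold alloc
      rw [← Finset.sum_add_distrib]
      apply Finset.sum_congr rfl
      intro X _
      by_cases h : X = T <;> simp [h] <;> ring
    rw [this, Finset.sum_ite_eq' Finset.univ T (fun X => A i X)]
    simp [hv0alloc]
  have keymono : ∀ T : Finset (Fin n),
      MonotoneCF (fun X => v0 X + (if X = T then 1 else 0)) := by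
    intro T X Y h
    rcases eq_or_ne X Y with rfl | hne
    · exact le_refl _
    · dsimp only
      have hlt : X ⊂ Y := h.ssubset_of_ne hne
      have hcard : X.card + 1 ≤ Y.card := Finset.card_lt_card hlt
      have h1 : v0 X + (if X = T then 1 else 0) ≤ v0 X + 1 := by
        split <;> simp
      have h2 : v0 X + 1 ≤ v0 Y := by
        simp only [hv0]
        exact_mod_cast hcard
      have h3 : v0 Y ≤ v0 Y + (if Y = T then 1 else 0) := by
        split <;> simp
      linarith
  constructor
  · -- bounds for A i (insert i S)
    set T := insert i S with hT
    set v1 : Finset (Fin n) → ℝ := fun X => v0 X + (if X = T then 1 else 0) with hv1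
    have hmarg : ∀ X : Finset (Fin n), i ∉ X →
        v1 (insert i X) - v1 X = 1 + (if insert i X = T then 1 else 0) := by
      intro X hX
      have hXT : X ≠ T := by
        intro h; rw [h] at hX; exact hX (Finset.mem_insert_self i S)
      simp [hv1, hXT, hv0marg X hX, hv0, Finset.card_insert_of_notMem hX]
      ring
    obtain ⟨h1, h2⟩ := hA v1 (keymono T) i
    have hge : (1:ℝ) ≤ margMin i v1 := by
      apply hmin
      intro X hX
      rw [hmarg X hX]
      split <;> norm_num
    have hle : margMax i v1 ≤ 2 := by
      apply hmax
      intro X hX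
      rw [hmarg X hX]
      split <;> norm_num
    have := key T
    constructor
    · have : (1:ℝ) ≤ 1 + A i T := by
        calc (1:ℝ) ≤ margMin i v1 := hge
        _ ≤ alloc A i v1 := h1
        _ = 1 + A i T := key T
      linarith
    · have : (1:ℝ) + A i T ≤ 2 := by
        calc (1:ℝ) + A i T = alloc A i v1 := (key T).symm
        _ ≤ margMax i v1 := h2
        _ ≤ 2 := hle
      linarith
  · -- bounds for A i S
    set v1 : Finset (Fin n) → ℝ := fun X => v0 X + (if X = S then 1 else 0) with hv1
    have hmarg : ∀ X : Finset (Fin n), i ∉ X →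
        v1 (insert i X) - v1 X = 1 - (if X = S then 1 else 0) := by
      intro X hX
      have hXT : insert i X ≠ S := by
        intro h; rw [← h] at hiS; exact hiS (Finset.mem_insert_self i X)
      simp [hv1, hXT, hv0, Finset.card_insert_of_notMem hX]
    obtain ⟨h1, h2⟩ := hA v1 (keymono S) i
    have hge : (0:ℝ) ≤ margMin i v1 := by
      apply hmin
      intro X hX
      rw [hmarg X hX]
      split <;> norm_num
    have hle : margMax i v1 ≤ 1 := by
      apply hmax
      intro X hX
      rw [hmarg X hX]
      split <;> norm_num
    constructor
    · have : (0:ℝ) ≤ 1 + A i S := by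
        calc (0:ℝ) ≤ margMin i v1 := hge
        _ ≤ alloc A i v1 := h1
        _ = 1 + A i S := key S
      linarith
    · have : (1:ℝ) + A i S ≤ 1 := by
        calc (1:ℝ) + A i S = alloc A i v1 := (key S).symm
        _ ≤ margMax i v1 := h2
        _ ≤ 1 := hle
      linarith
end

section
/- Let φ be a reasonable and efficient allocation with matrix A. Then for every player i, 0 ≤ A_{i,{i}} ≤ 1 and -1 ≤ A_{i,∅} ≤ 0. -/
open Finset

lemma margMin_ge {n : ℕ} (i : Fin n) (v : Finset (Fin n) → ℝ) (c : ℝ)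
    (h : ∀ S : Finset (Fin n), i ∉ S → c ≤ v (insert i S) - v S) : c ≤ margMin i v := by
  apply Finset.le_min'
  intro y hy
  simp only [Finset.mem_image, Finset.mem_filter, Finset.mem_univ, true_and] at hy
  obtain ⟨S, hS, rfl⟩ := hy
  exact h S hS

lemma margMax_le {n : ℕ} (i : Fin n) (v : Finset (Fin n) → ℝ) (c : ℝ)
    (h : ∀ S : Finset (Fin n), i ∉ S → v (insert i S) - v S ≤ c) : margMax i v ≤ c := by
  apply Finset.max'_le
  intro y hy
  simp only [Finset.mem_image, Finset.mem_filter, Finset.mem_univ, true_and] at hy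
  obtain ⟨S, hS, rfl⟩ := hy
  exact h S hS

/-- for a reasonable, efficient allocation,
`0 ≤ A_{i,{i}} ≤ 1` and `-1 ≤ A_{i,∅} ≤ 0`. -/
theorem singleton_empty_bounds {n : ℕ} (A : Fin n → Finset (Fin n) → ℝ)
    (hA : Reasonable A) (hE : Efficient A) :
    ∀ i : Fin n, (0 ≤ A i {i} ∧ A i {i} ≤ 1) ∧ (-1 ≤ A i ∅ ∧ A i ∅ ≤ 0) := by
  intro i
  -- games
  set v1 : Finset (Fin n) → ℝ := fun S => if i ∈ S then 1 else 0 with hv1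
  set v2 : Finset (Fin n) → ℝ := fun S => if i ∈ S ∧ S ≠ {i} then 1 else 0 with hv2
  set v3 : Finset (Fin n) → ℝ := fun S => if S = ∅ then 0 else 1 with hv3
  set v4 : Finset (Fin n) → ℝ := fun _ => 1 with hv4
  have mono1 : MonotoneCF v1 := by
    intro S T hST
    simp only [hv1]
    split_ifs with h1 h2 <;> try norm_num
    exact h2 (hST h1)
  have mono2 : MonotoneCF v2 := by
    intro S T hST
    simp only [hv2]
    by_cases h1 : i ∈ S ∧ S ≠ {i}
    · have h2 : i ∈ T ∧ T ≠ {i} := by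
        refine ⟨hST h1.1, fun hT => h1.2 ?_⟩
        apply Finset.Subset.antisymm
        · intro x hx; have := hST hx; rwa [hT] at this
        · simp [h1.1]
      simp [h1, h2]
    · simp only [h1, if_false]
      split_ifs <;> norm_num
  have mono3 : MonotoneCF v3 := by
    intro S T hST
    simp only [hv3]
    by_cases h2 : T = ∅
    · have h1 : S = ∅ := Finset.subset_empty.mp (h2 ▸ hST)
      simp [h1, h2]
    · split_ifs <;> norm_num
  have mono4 : MonotoneCF v4 := by intro S T _; simp [hv4]
  -- alloc values
  have r1 := hA v1 mono1 i
  have r2 := hA v2 mono2 i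
  have r3 := hA v3 mono3 i
  have r4 := hA v4 mono4 i
  have a1 : alloc A i v1 = 1 := by
    have hlo : (1:ℝ) ≤ margMin i v1 := by
      apply margMin_ge
      intro S hS
      simp [hv1, hS]
    have hhi : margMax i v1 ≤ 1 := by
      apply margMax_le
      intro S hS
      simp [hv1, hS]
    linarith [r1.1, r1.2]
  have a2lo : (0:ℝ) ≤ alloc A i v2 := by
    have : (0:ℝ) ≤ margMin i v2 := by
      apply margMin_ge
      intro S hS
      simp only [hv2, hS, false_and, if_false, sub_zero]
      split_ifs <;> norm_num
    linarith [r2.1]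
  have a2hi : alloc A i v2 ≤ 1 := by
    have : margMax i v2 ≤ 1 := by
      apply margMax_le
      intro S hS
      simp only [hv2, hS, false_and, if_false, sub_zero]
      split_ifs <;> norm_num
    linarith [r2.2]
  have a3lo : (0:ℝ) ≤ alloc A i v3 := by
    have : (0:ℝ) ≤ margMin i v3 := by
      apply margMin_ge
      intro S hS
      simp only [hv3]
      rw [if_neg (Finset.insert_ne_empty i S)]
      split_ifs <;> norm_num
    linarith [r3.1]
  have a3hi : alloc A i v3 ≤ 1 := by
    have : margMax i v3 ≤ 1 := by
      apply margMax_le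
      intro S hS
      simp only [hv3]
      split_ifs <;> norm_num
    linarith [r3.2]
  have a4 : alloc A i v4 = 0 := by
    have hlo : (0:ℝ) ≤ margMin i v4 := by
      apply margMin_ge; intro S hS; simp [hv4]
    have hhi : margMax i v4 ≤ 0 := by
      apply margMax_le; intro S hS; simp [hv4]
    linarith [r4.1, r4.2]
  -- identities
  have key1 : A i {i} = alloc A i v1 - alloc A i v2 := by
    unfold alloc
    rw [← Finset.sum_sub_distrib]
    rw [show A i {i} = ∑ S : Finset (Fin n), if S = {i} then A i S else 0 by
      rw [Finset.sum_ite_eq' Finset.univ ({i} : Finset (Fin n)) (A i)]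
      simp]
    apply Finset.sum_congr rfl
    intro S _
    by_cases h : S = {i}
    · subst h; simp [hv1, hv2]
    · by_cases hi : i ∈ S
      · simp [hv1, hv2, hi, h]
      · simp [hv1, hv2, hi, h]
  have key2 : A i ∅ = alloc A i v4 - alloc A i v3 := by
    unfold alloc
    rw [← Finset.sum_sub_distrib]
    rw [show A i ∅ = ∑ S : Finset (Fin n), if S = ∅ then A i S else 0 by
      rw [Finset.sum_ite_eq' Finset.univ (∅ : Finset (Fin n)) (A i)]
      simp]
    apply Finset.sum_congr rfl
    intro S _
    by_cases h : S = ∅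
    · subst h; simp [hv3, hv4]
    · simp [hv3, hv4, h]
  constructor
  · constructor <;> [linarith [key1, a1, a2hi]; linarith [key1, a1, a2lo]]
  · constructor <;> [linarith [key2, a4, a3hi]; linarith [key2, a4, a3lo]]
end

section
/- (Sign theorem) Let φ be a reasonable, efficient allocation with matrix A. Then for every player i and every S ⊆ N: if i ∈ S then 0 ≤ A_{i,S} ≤ 1, and if i ∉ S then -1 ≤ A_{i,S} ≤ 0. -/
open Finset

open Finset

section Aux
variable {n : ℕ}

lemma margMin_nonneg (i : Fin n) (v : Finset (Fin n) → ℝ) (hm : MonotoneCF v) :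
    0 ≤ margMin i v := by
  apply Finset.le_min'
  intro y hy
  simp only [Finset.mem_image, Finset.mem_filter, Finset.mem_univ, true_and] at hy
  obtain ⟨R, _, rfl⟩ := hy
  have := hm R (insert i R) (Finset.subset_insert i R)
  linarith

lemma margMax_le_one (i : Fin n) (v : Finset (Fin n) → ℝ)
    (h01 : ∀ R, v R = 0 ∨ v R = 1) : margMax i v ≤ 1 := by
  apply Finset.max'_le
  intro y hy
  simp only [Finset.mem_image, Finset.mem_filter, Finset.mem_univ, true_and] at hy
  obtain ⟨R, _, rfl⟩ := hy
  rcases h01 (insert i R) with h1 | h1 <;> rcases h01 R with h2 | h2 <;>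
    rw [h1, h2] <;> norm_num

lemma margMax_nonpos (i : Fin n) (v : Finset (Fin n) → ℝ)
    (h0 : ∀ R, i ∉ R → v (insert i R) = v R) : margMax i v ≤ 0 := by
  apply Finset.max'_le
  intro y hy
  simp only [Finset.mem_image, Finset.mem_filter, Finset.mem_univ, true_and] at hy
  obtain ⟨R, hiR, rfl⟩ := hy
  rw [h0 R hiR]; simp

lemma margMin_nonneg' (i : Fin n) (v : Finset (Fin n) → ℝ)
    (h0 : ∀ R, i ∉ R → v (insert i R) = v R) : 0 ≤ margMin i v := by
  apply Finset.le_min'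
  intro y hy
  simp only [Finset.mem_image, Finset.mem_filter, Finset.mem_univ, true_and] at hy
  obtain ⟨R, hiR, rfl⟩ := hy
  rw [h0 R hiR]; simp

lemma alloc_null {A : Fin n → Finset (Fin n) → ℝ} (hA : Reasonable A)
    (v : Finset (Fin n) → ℝ) (hm : MonotoneCF v) (i : Fin n)
    (h0 : ∀ R, i ∉ R → v (insert i R) = v R) : alloc A i v = 0 := by
  have h := hA v hm i
  have h1 := margMin_nonneg' i v h0
  have h2 := margMax_nonpos i v h0
  linarith [h.1, h.2]

lemma alloc_indicator (A : Fin n → Finset (Fin n) → ℝ) (i : Fin n)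
    (P : Finset (Fin n) → Prop) [DecidablePred P] :
    alloc A i (fun R => if P R then 1 else 0) = ∑ R ∈ univ.filter P, A i R := by
  rw [alloc, Finset.sum_filter]
  congr 1; ext R
  split <;> simp

end Aux

section Main
variable {n : ℕ}

lemma my_subset_insert_iff {i : Fin n} {S R : Finset (Fin n)} (hiS : i ∉ S) :
    S ⊆ insert i R ↔ S ⊆ R := by
  constructor
  · intro h x hx
    rcases Finset.mem_insert.mp (h hx) with rfl | h'
    · exact absurd hx hiS
    · exact h'
  · intro h; exact h.trans (Finset.subset_insert _ _)

lemma key_notMem {A : Fin n → Finset (Fin n) → ℝ} (hA : Reasonable A)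
    (i : Fin n) (S : Finset (Fin n)) (hiS : i ∉ S) :
    (∑ R ∈ univ.filter (fun R => S ⊆ R), A i R) = 0 ∧ -1 ≤ A i S ∧ A i S ≤ 0 := by
  classical
  -- the game v1 = indicator of supersets of S
  have hm1 : MonotoneCF (fun R => if S ⊆ R then (1:ℝ) else 0) := by
    intro R R' h
    dsimp only
    by_cases hSR : S ⊆ R
    · rw [if_pos hSR, if_pos (hSR.trans h)]
    · by_cases hSR' : S ⊆ R' <;> simp [hSR, hSR']
  have hnull1 : ∀ R, i ∉ R →
      (if S ⊆ insert i R then (1:ℝ) else 0) = (if S ⊆ R then (1:ℝ) else 0) := by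
    intro R _
    rw [if_congr (my_subset_insert_iff hiS) rfl rfl]
  have h1 : alloc A i (fun R => if S ⊆ R then (1:ℝ) else 0) = 0 :=
    alloc_null hA _ hm1 i hnull1
  rw [alloc_indicator] at h1
  refine ⟨h1, ?_⟩
  -- the game v2 = indicator of strict supersets of S
  have hm2 : MonotoneCF (fun R => if S ⊆ R ∧ R ≠ S then (1:ℝ) else 0) := by
    intro R R' h
    dsimp only
    by_cases hR : S ⊆ R ∧ R ≠ S
    · have hss : S ⊂ R := Finset.ssubset_iff_subset_ne.mpr ⟨hR.1, Ne.symm hR.2⟩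
      have hss' : S ⊂ R' := hss.trans_subset h
      rw [if_pos hR, if_pos ⟨hss'.subset, hss'.ne'⟩]
    · rw [if_neg hR]
      split <;> norm_num
  have h01 : ∀ R, (if S ⊆ R ∧ R ≠ S then (1:ℝ) else 0) = 0 ∨
      (if S ⊆ R ∧ R ≠ S then (1:ℝ) else 0) = 1 := by
    intro R; split <;> simp
  have hb := hA (fun R => if S ⊆ R ∧ R ≠ S then (1:ℝ) else 0) hm2 i
  have hlo := (margMin_nonneg i _ hm2).trans hb.1
  have hhi := hb.2.trans (margMax_le_one i _ h01)
  rw [alloc_indicator] at hlo hhi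
  have hset : univ.filter (fun R => S ⊆ R ∧ R ≠ S)
      = (univ.filter (fun R => S ⊆ R)).erase S := by
    ext R
    simp only [Finset.mem_erase, Finset.mem_filter, Finset.mem_univ, true_and]
    tauto
  have hSmem : S ∈ univ.filter (fun R => S ⊆ R) := by simp
  rw [hset, Finset.sum_erase_eq_sub hSmem, h1] at hlo hhi
  constructor <;> linarith

lemma key_mem {A : Fin n → Finset (Fin n) → ℝ} (hA : Reasonable A)
    (i : Fin n) (S : Finset (Fin n)) (hiS : i ∈ S) : A i S = - A i (S.erase i) := by
  classical
  set T := S.erase i with hT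
  have hiT : i ∉ T := Finset.notMem_erase i S
  have hins : insert i T = S := Finset.insert_erase hiS
  have hTS : T ⊆ S := Finset.erase_subset i S
  have hTneS : T ≠ S := by
    intro h; rw [h] at hiT; exact hiT hiS
  -- indicator of supersets of T other than T and S : monotone and null for i
  have hm3 : MonotoneCF (fun R => if T ⊆ R ∧ R ≠ T ∧ R ≠ S then (1:ℝ) else 0) := by
    intro R R' h
    dsimp only
    by_cases hR : T ⊆ R ∧ R ≠ T ∧ R ≠ S
    · obtain ⟨h1, h2, h3⟩ := hR
      have hss : T ⊂ R := Finset.ssubset_iff_subset_ne.mpr ⟨h1, Ne.symm h2⟩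
      have hss' : T ⊂ R' := hss.trans_subset h
      have hR'S : R' ≠ S := by
        rintro rfl
        have hRsub : R ⊆ insert i T := hins ▸ h
        by_cases hiR : i ∈ R
        · exact h3 (le_antisymm (hins ▸ h) (hins ▸ Finset.insert_subset hiR h1))
        · exact h2 (le_antisymm (fun x hx => by
            rcases Finset.mem_insert.mp (hRsub hx) with rfl | hx'
            · exact absurd hx hiR
            · exact hx') h1)
      rw [if_pos ⟨h1, h2, h3⟩, if_pos ⟨hss'.subset, hss'.ne', hR'S⟩]
    · rw [if_neg hR]
      split <;> norm_num
  have hnull3 : ∀ R, i ∉ R →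
      (if T ⊆ insert i R ∧ insert i R ≠ T ∧ insert i R ≠ S then (1:ℝ) else 0)
        = (if T ⊆ R ∧ R ≠ T ∧ R ≠ S then (1:ℝ) else 0) := by
    intro R hiR
    have e1 : T ⊆ insert i R ↔ T ⊆ R := my_subset_insert_iff hiT
    have e2 : insert i R ≠ T := by
      intro h; rw [← h] at hiT; exact hiT (Finset.mem_insert_self i R)
    have e3 : insert i R ≠ S ↔ R ≠ T := by
      rw [← hins]
      constructor
      · intro h h'; exact h (by rw [h'])
      · intro h h'
        apply h
        have := congrArg (Finset.erase · i) h'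
        simpa [Finset.erase_insert hiR, Finset.erase_insert hiT] using this
    have e4 : R ≠ S := by rintro rfl; exact hiR hiS
    have heq : (T ⊆ insert i R ∧ insert i R ≠ T ∧ insert i R ≠ S)
        ↔ (T ⊆ R ∧ R ≠ T ∧ R ≠ S) := by
      constructor
      · rintro ⟨a, -, c⟩; exact ⟨e1.mp a, e3.mp c, e4⟩
      · rintro ⟨a, b, -⟩; exact ⟨e1.mpr a, e2, e3.mpr b⟩
    rw [if_congr heq rfl rfl]
  have h3 : alloc A i (fun R => if T ⊆ R ∧ R ≠ T ∧ R ≠ S then (1:ℝ) else 0) = 0 :=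
    alloc_null hA _ hm3 i hnull3
  rw [alloc_indicator] at h3
  have hsum := (key_notMem hA i T hiT).1
  have hset : univ.filter (fun R => T ⊆ R ∧ R ≠ T ∧ R ≠ S)
      = ((univ.filter (fun R => T ⊆ R)).erase T).erase S := by
    ext R
    simp only [Finset.mem_erase, Finset.mem_filter, Finset.mem_univ, true_and]
    tauto
  have hTmem : T ∈ univ.filter (fun R => T ⊆ R) := by simp
  have hSmem : S ∈ (univ.filter (fun R => T ⊆ R)).erase T := by
    simp [Finset.mem_erase, hTS, Ne.symm hTneS]
  rw [hset, Finset.sum_erase_eq_sub hSmem, Finset.sum_erase_eq_sub hTmem, hsum] at h3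
  linarith

end Main

/-- sign theorem: for a reasonable, efficient allocation,
entries with `i ∈ S` lie in `[0,1]` and entries with `i ∉ S` lie in `[-1,0]`. -/
theorem sign_of_entries {n : ℕ} (A : Fin n → Finset (Fin n) → ℝ)
    (hA : Reasonable A) (hE : Efficient A) :
    ∀ (i : Fin n) (S : Finset (Fin n)),
      (i ∈ S → 0 ≤ A i S ∧ A i S ≤ 1) ∧
      (i ∉ S → -1 ≤ A i S ∧ A i S ≤ 0) := by
  intro i S
  constructor
  · intro hiS
    have h1 := key_mem hA i S hiS
    have h2 := (key_notMem hA i (S.erase i) (Finset.notMem_erase i S)).2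
    constructor <;> linarith [h2.1, h2.2]
  · intro hiS
    exact (key_notMem hA i S hiS).2
end

section
/- Let φ be a reasonable allocation with matrix A. Then for each player i, ∑_{S : i ∉ S} A_{i, S ∪ {i}} = 1, and consequently ∑_{S : i ∉ S} A_{i,S} = -1. -/
open Finset

lemma margMin_const {n : ℕ} (i : Fin n) (v : Finset (Fin n) → ℝ) (c : ℝ)
    (h : ∀ S : Finset (Fin n), i ∉ S → v (insert i S) - v S = c) :
    margMin i v = c := by
  have hm := Finset.min'_mem
    ((Finset.univ.filter (fun S : Finset (Fin n) => i ∉ S)).image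
      (fun S => v (insert i S) - v S))
    (Finset.Nonempty.image ⟨∅, by simp⟩ _)
  rw [Finset.mem_image] at hm
  obtain ⟨S, hS, hSv⟩ := hm
  simp only [Finset.mem_filter] at hS
  rw [margMin, ← hSv, h S hS.2]

lemma margMax_const {n : ℕ} (i : Fin n) (v : Finset (Fin n) → ℝ) (c : ℝ)
    (h : ∀ S : Finset (Fin n), i ∉ S → v (insert i S) - v S = c) :
    margMax i v = c := by
  have hm := Finset.max'_mem
    ((Finset.univ.filter (fun S : Finset (Fin n) => i ∉ S)).image
      (fun S => v (insert i S) - v S))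
    (Finset.Nonempty.image ⟨∅, by simp⟩ _)
  rw [Finset.mem_image] at hm
  obtain ⟨S, hS, hSv⟩ := hm
  simp only [Finset.mem_filter] at hS
  rw [margMax, ← hSv, h S hS.2]

/-- for a reasonable allocation,
`∑_{S : i ∉ S} A_{i,S∪{i}} = 1` and `∑_{S : i ∉ S} A_{i,S} = -1`. -/
theorem partial_row_sums {n : ℕ} (A : Fin n → Finset (Fin n) → ℝ)
    (hA : Reasonable A) :
    ∀ i : Fin n,
      (∑ S ∈ Finset.univ.filter (fun S : Finset (Fin n) => i ∉ S),
        A i (insert i S)) = 1 ∧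
      (∑ S ∈ Finset.univ.filter (fun S : Finset (Fin n) => i ∉ S),
        A i S) = -1 := by

  intro i
  -- constant game: row sums to 0
  have hzero : (∑ S : Finset (Fin n), A i S) = 0 := by
    have hmono : MonotoneCF (fun _ : Finset (Fin n) => (1 : ℝ)) := fun S T _ => le_refl _
    have h := hA _ hmono i
    have hmin : margMin i (fun _ : Finset (Fin n) => (1 : ℝ)) = 0 :=
      margMin_const i _ 0 (fun S _ => by simp)
    have hmax : margMax i (fun _ : Finset (Fin n) => (1 : ℝ)) = 0 :=
      margMax_const i _ 0 (fun S _ => by simp)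
    have : alloc A i (fun _ : Finset (Fin n) => (1 : ℝ)) = ∑ S : Finset (Fin n), A i S := by
      simp [alloc]
    rw [this, hmin, hmax] at h
    linarith [h.1, h.2]
  -- indicator game of i
  set v : Finset (Fin n) → ℝ := fun S => if i ∈ S then 1 else 0 with hv
  have hmono : MonotoneCF v := by
    intro S T hST
    simp only [hv]
    by_cases hS : i ∈ S
    · simp [hS, hST hS]
    · by_cases hT : i ∈ T <;> simp [hS, hT]
  have h := hA v hmono i
  have hmin : margMin i v = 1 := margMin_const i v 1 (fun S hS => by simp [hv, hS])
  have hmax : margMax i v = 1 := margMax_const i v 1 (fun S hS => by simp [hv, hS])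
  have halloc : alloc A i v =
      ∑ S ∈ Finset.univ.filter (fun S : Finset (Fin n) => i ∈ S), A i S := by
    rw [alloc, Finset.sum_filter]
    apply Finset.sum_congr rfl
    intro S _
    by_cases hS : i ∈ S <;> simp [hv, hS]
  have hone : (∑ S ∈ Finset.univ.filter (fun S : Finset (Fin n) => i ∈ S), A i S) = 1 := by
    rw [hmin, hmax, halloc] at h
    linarith [h.1, h.2]
  constructor
  · rw [← hone]
    apply Finset.sum_nbij' (fun S => insert i S) (fun S => S.erase i)
    · intro S hS
      simp only [Finset.mem_filter, Finset.mem_univ, true_and] at hS ⊢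
      exact Finset.mem_insert_self i S
    · intro S hS
      simp only [Finset.mem_filter, Finset.mem_univ, true_and] at hS ⊢
      exact Finset.notMem_erase i S
    · intro S hS
      simp only [Finset.mem_filter, Finset.mem_univ, true_and] at hS
      exact Finset.erase_insert hS
    · intro S hS
      simp only [Finset.mem_filter, Finset.mem_univ, true_and] at hS
      exact Finset.insert_erase hS
    · intro S _
      rfl
  · have hsplit := Finset.sum_filter_add_sum_filter_not Finset.univ
      (fun S : Finset (Fin n) => i ∈ S) (fun S => A i S)
    have : (∑ S ∈ Finset.univ.filter (fun S : Finset (Fin n) => ¬ i ∈ S), A i S) = -1 := by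
      have := hsplit.trans hzero
      linarith [hone]
    simpa using this
end

section
/- Let A be a matrix indexed by players i and sets S such that for each player i: (a) A_{i,S} ≥ 0 when i ∈ S and A_{i,S} ≤ 0 when i ∉ S; (b) A_{i,T} = -A_{i, T ∪ {i}} for all T with i ∉ T; and (c) ∑_{T : i ∉ T} A_{i, T ∪ {i}} = 1. Then the allocation φ with φ_i(v) = ∑_S A_{i,S} v(S) is reasonable, i.e. for every monotone v, min_{T : i ∉ T} (v(T ∪ {i}) - v(T)) ≤ φ_i(v) ≤ max_{T : i ∉ T} (v(T ∪ {i}) - v(T)). -/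
open Finset

/-- signs, pairing, and partial row sums `1` imply reasonableness. -/
theorem signs_pairing_sum_imp_reasonable {n : ℕ} (hn : 0 < n)
    (A : Fin n → Finset (Fin n) → ℝ)
    (hsign : ∀ (i : Fin n) (S : Finset (Fin n)),
      (i ∈ S → 0 ≤ A i S) ∧ (i ∉ S → A i S ≤ 0))
    (hpair : ∀ (i : Fin n) (T : Finset (Fin n)), i ∉ T →
      A i T = - A i (insert i T))
    (hsum : ∀ i : Fin n,
      (∑ T ∈ Finset.univ.filter (fun T : Finset (Fin n) => i ∉ T),
        A i (insert i T)) = 1) :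
    Reasonable A := by
  intro v hv i
  set F := Finset.univ.filter (fun T : Finset (Fin n) => i ∉ T) with hF
  have hne : F.Nonempty := ⟨∅, by simp [hF]⟩
  -- rewrite alloc as convex combination
  have key : alloc A i v
      = ∑ T ∈ F, A i (insert i T) * (v (insert i T) - v T) := by
    unfold alloc
    rw [← Finset.sum_filter_add_sum_filter_not Finset.univ
      (fun S : Finset (Fin n) => i ∉ S) (fun S => A i S * v S)]
    have h1 : ∑ S ∈ Finset.univ.filter (fun S : Finset (Fin n) => ¬ i ∉ S),
        A i S * v S = ∑ T ∈ F, A i (insert i T) * v (insert i T) := by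
      apply Finset.sum_nbij' (fun S => S.erase i) (fun T => insert i T)
      · intro S hS
        simp only [Finset.mem_filter, Finset.mem_univ, not_not] at hS
        simp [hF]
      · intro T hT
        simp only [hF, Finset.mem_filter, Finset.mem_univ] at hT ⊢
        simp [hT.2]
      · intro S hS
        simp only [Finset.mem_filter, Finset.mem_univ, not_not] at hS
        exact Finset.insert_erase hS.2
      · intro T hT
        simp only [hF, Finset.mem_filter, Finset.mem_univ] at hT
        exact Finset.erase_insert hT.2
      · intro S hS
        simp only [Finset.mem_filter, Finset.mem_univ, not_not] at hS
        rw [Finset.insert_erase hS.2]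
    have h2 : ∑ S ∈ F, A i S * v S
        = ∑ T ∈ F, (- A i (insert i T)) * v T := by
      apply Finset.sum_congr rfl
      intro T hT
      simp only [hF, Finset.mem_filter, Finset.mem_univ] at hT
      rw [hpair i T hT.2]
    rw [h1, h2, ← Finset.sum_add_distrib]
    apply Finset.sum_congr rfl
    intro T _
    ring
  have hcnn : ∀ T ∈ F, 0 ≤ A i (insert i T) := fun T _ =>
    (hsign i (insert i T)).1 (Finset.mem_insert_self i T)
  have hmem : ∀ T ∈ F, v (insert i T) - v T ∈
      (F.image (fun S => v (insert i S) - v S)) := fun T hT =>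
    Finset.mem_image_of_mem _ hT
  constructor
  · rw [key]
    calc margMin i v = ∑ T ∈ F, A i (insert i T) * margMin i v := by
          rw [← Finset.sum_mul, hsum i, one_mul]
      _ ≤ ∑ T ∈ F, A i (insert i T) * (v (insert i T) - v T) := by
          apply Finset.sum_le_sum
          intro T hT
          exact mul_le_mul_of_nonneg_left
            (Finset.min'_le _ _ (hmem T hT)) (hcnn T hT)
  · rw [key]
    calc ∑ T ∈ F, A i (insert i T) * (v (insert i T) - v T)
        ≤ ∑ T ∈ F, A i (insert i T) * margMax i v := by
          apply Finset.sum_le_sum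
          intro T hT
          exact mul_le_mul_of_nonneg_left
            (Finset.le_max' _ _ (hmem T hT)) (hcnn T hT)
      _ = margMax i v := by rw [← Finset.sum_mul, hsum i, one_mul]
end

section
/- An allocation is reasonable and efficient if and only if it lies in the convex hull of the special allocations (the allocations arising from maximal chains of subsets, equivalently from permutations of the players assigning marginal contributions). -/
open Finset

/-- The special allocation matrix associated with a permutation (ordering) of the
players: player `i` receives `v {j : σ j ≤ σ i} - v {j : σ j < σ i}`. -/
noncomputable def specialA {n : ℕ} (σ : Equiv.Perm (Fin n)) :
    Fin n → Finset (Fin n) → ℝ :=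
  fun i S =>
    (if S = Finset.univ.filter (fun j => σ j ≤ σ i) then (1 : ℝ) else 0) -
    (if S = Finset.univ.filter (fun j => σ j < σ i) then 1 else 0)


namespace REaux

variable {n : ℕ}

/-- probability weight of player `i` joining coalition `S` -/
noncomputable def pA (A : Fin n → Finset (Fin n) → ℝ) (i : Fin n) (S : Finset (Fin n)) : ℝ :=
  A i (insert i S)

/-- total outflow at `S` -/
noncomputable def FA (A : Fin n → Finset (Fin n) → ℝ) (S : Finset (Fin n)) : ℝ :=
  ∑ i ∈ Sᶜ, pA A i S

noncomputable def wA (A : Fin n → Finset (Fin n) → ℝ) (i : Fin n) (S : Finset (Fin n)) : ℝ :=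
  pA A i S / FA A S

/-- the coalition formed at time `m` under ordering `σ` -/
def CmS (σ : Equiv.Perm (Fin n)) (m : ℕ) : Finset (Fin n) :=
  univ.filter (fun j => (σ j : ℕ) < m)

noncomputable def stepw (A : Fin n → Finset (Fin n) → ℝ) (σ : Equiv.Perm (Fin n)) (m : ℕ) : ℝ :=
  if h : m < n then wA A (σ.symm ⟨m, h⟩) (CmS σ m) else 1

noncomputable def prefP (A : Fin n → Finset (Fin n) → ℝ) (σ : Equiv.Perm (Fin n)) (k : ℕ) : ℝ :=
  ∏ m ∈ Finset.range k, stepw A σ m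

noncomputable def tailP (A : Fin n → Finset (Fin n) → ℝ) (σ : Equiv.Perm (Fin n)) (k : ℕ) : ℝ :=
  ∏ m ∈ Finset.Ico k n, stepw A σ m

lemma CmS_zero (σ : Equiv.Perm (Fin n)) : CmS σ 0 = ∅ := by
  simp [CmS]

lemma mem_CmS {σ : Equiv.Perm (Fin n)} {m : ℕ} {j : Fin n} :
    j ∈ CmS σ m ↔ (σ j : ℕ) < m := by simp [CmS]

lemma symm_notMem_CmS (σ : Equiv.Perm (Fin n)) {m : ℕ} (hm : m < n) :
    σ.symm ⟨m, hm⟩ ∉ CmS σ m := by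
  simp [mem_CmS]

lemma CmS_succ (σ : Equiv.Perm (Fin n)) {m : ℕ} (hm : m < n) :
    CmS σ (m + 1) = insert (σ.symm ⟨m, hm⟩) (CmS σ m) := by
  ext j
  simp only [mem_CmS, mem_insert, Nat.lt_succ_iff_lt_or_eq]
  constructor
  · rintro (h | h)
    · exact Or.inr h
    · left
      have h2 : σ j = ⟨m, hm⟩ := Fin.ext h
      simpa using congrArg σ.symm h2
  · rintro (rfl | h)
    · right; simp
    · exact Or.inl h

lemma card_CmS (σ : Equiv.Perm (Fin n)) : ∀ m, m ≤ n → (CmS σ m).card = m := by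
  intro m
  induction m with
  | zero => intro _; simp [CmS_zero]
  | succ m ih =>
    intro hm
    have hmn : m < n := hm
    rw [CmS_succ σ hmn, card_insert_of_notMem (symm_notMem_CmS σ hmn), ih (le_of_lt hmn)]

lemma CmS_univ (σ : Equiv.Perm (Fin n)) : CmS σ n = univ := by
  apply eq_univ_of_card
  simpa using card_CmS σ n le_rfl

lemma CmS_eq_of_agree_lt {σ τ : Equiv.Perm (Fin n)} {k : ℕ}
    (h : ∀ v : Fin n, (v : ℕ) < k → σ.symm v = τ.symm v) {m : ℕ} (hm : m ≤ k) :
    CmS σ m = CmS τ m := by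
  ext j
  simp only [mem_CmS]
  constructor
  · intro hj
    have h1 : σ.symm (σ j) = τ.symm (σ j) := h _ (lt_of_lt_of_le hj hm)
    rw [Equiv.symm_apply_apply] at h1
    have h2 := congrArg τ h1
    rw [Equiv.apply_symm_apply] at h2
    rw [h2]; exact hj
  · intro hj
    have h1 : τ.symm (τ j) = σ.symm (τ j) := (h _ (lt_of_lt_of_le hj hm)).symm
    rw [Equiv.symm_apply_apply] at h1
    have h2 := congrArg σ h1
    rw [Equiv.apply_symm_apply] at h2
    rw [h2]; exact hj

lemma CmS_eq_of_agree_ge {σ τ : Equiv.Perm (Fin n)} {k : ℕ}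
    (h : ∀ v : Fin n, k ≤ (v : ℕ) → σ.symm v = τ.symm v) {m : ℕ} (hm : k ≤ m) :
    CmS σ m = CmS τ m := by
  ext j
  simp only [mem_CmS]
  constructor
  · intro hj
    by_contra hc
    push_neg at hc
    have h1 : σ.symm (τ j) = τ.symm (τ j) := h _ (le_trans hm hc)
    rw [Equiv.symm_apply_apply] at h1
    have h2 := congrArg σ h1
    rw [Equiv.apply_symm_apply] at h2
    rw [h2] at hc
    omega
  · intro hj
    by_contra hc
    push_neg at hc
    have h1 : σ.symm (σ j) = τ.symm (σ j) := h _ (le_trans hm hc)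
    rw [Equiv.symm_apply_apply] at h1
    have h2 := congrArg τ h1
    rw [Equiv.apply_symm_apply] at h2
    rw [h2] at hj
    omega

lemma stepw_eq_of_agree_lt {A : Fin n → Finset (Fin n) → ℝ} {σ τ : Equiv.Perm (Fin n)} {k : ℕ}
    (h : ∀ v : Fin n, (v : ℕ) < k → σ.symm v = τ.symm v) {m : ℕ} (hm : m < k) :
    stepw A σ m = stepw A τ m := by
  unfold stepw
  split
  · next hmn =>
    rw [h ⟨m, hmn⟩ hm, CmS_eq_of_agree_lt h (le_of_lt hm)]
  · rfl

lemma stepw_eq_of_agree_ge {A : Fin n → Finset (Fin n) → ℝ} {σ τ : Equiv.Perm (Fin n)} {k : ℕ}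
    (h : ∀ v : Fin n, k ≤ (v : ℕ) → σ.symm v = τ.symm v) {m : ℕ} (hm : k ≤ m) :
    stepw A σ m = stepw A τ m := by
  unfold stepw
  split
  · next hmn =>
    rw [h ⟨m, hmn⟩ hm, CmS_eq_of_agree_ge h hm]
  · rfl

lemma prefP_eq_of_agree_lt {A : Fin n → Finset (Fin n) → ℝ} {σ τ : Equiv.Perm (Fin n)} {k : ℕ}
    (h : ∀ v : Fin n, (v : ℕ) < k → σ.symm v = τ.symm v) :
    prefP A σ k = prefP A τ k := by
  unfold prefP
  exact Finset.prod_congr rfl fun m hm => stepw_eq_of_agree_lt h (Finset.mem_range.1 hm)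

lemma tailP_eq_of_agree_ge {A : Fin n → Finset (Fin n) → ℝ} {σ τ : Equiv.Perm (Fin n)} {k : ℕ}
    (h : ∀ v : Fin n, k ≤ (v : ℕ) → σ.symm v = τ.symm v) :
    tailP A σ k = tailP A τ k := by
  unfold tailP
  exact Finset.prod_congr rfl fun m hm => stepw_eq_of_agree_ge h (Finset.mem_Ico.1 hm).1

lemma prefP_mul_tailP {A : Fin n → Finset (Fin n) → ℝ} (σ : Equiv.Perm (Fin n)) {k : ℕ}
    (hk : k ≤ n) : prefP A σ k * tailP A σ k = prefP A σ n := by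
  unfold prefP tailP
  exact Finset.prod_range_mul_prod_Ico _ hk

lemma tailP_succ {A : Fin n → Finset (Fin n) → ℝ} (σ : Equiv.Perm (Fin n)) {k : ℕ}
    (hk : k < n) : tailP A σ k = stepw A σ k * tailP A σ (k + 1) := by
  unfold tailP
  have h1 : Finset.Ico k n = insert k (Finset.Ico (k + 1) n) := by
    ext m; simp [Finset.mem_Ico, Finset.mem_insert]; omega
  rw [h1, Finset.prod_insert (by simp)]

lemma prefP_succ (A : Fin n → Finset (Fin n) → ℝ) (σ : Equiv.Perm (Fin n)) (k : ℕ) :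
    prefP A σ (k + 1) = prefP A σ k * stepw A σ k := Finset.prod_range_succ _ _


/-! ### Recombination -/

def recP (c : ℕ) (σ τ : Equiv.Perm (Fin n)) : Equiv.Perm (Fin n) :=
  if h : CmS σ c = CmS τ c then
    { toFun := fun j => if j ∈ CmS σ c then σ j else τ j
      invFun := fun v => if (v : ℕ) < c then σ.symm v else τ.symm v
      left_inv := by
        intro j
        by_cases hj : j ∈ CmS σ c
        · simp only [hj, if_pos]
          rw [if_pos (mem_CmS.1 hj), Equiv.symm_apply_apply]
        · simp only [hj, if_neg, ite_false]
          have hj2 : j ∉ CmS τ c := h ▸ hj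
          rw [if_neg (by simpa [mem_CmS] using hj2), Equiv.symm_apply_apply]
      right_inv := by
        intro v
        dsimp only
        by_cases hv : (v : ℕ) < c
        · rw [if_pos hv, if_pos (by simp [mem_CmS, hv]), Equiv.apply_symm_apply]
        · rw [if_neg hv]
          have : τ.symm v ∉ CmS σ c := by
            rw [h]; simp [mem_CmS, hv]
          rw [if_neg this, Equiv.apply_symm_apply] }
  else σ

lemma recP_symm_lt {c : ℕ} {σ τ : Equiv.Perm (Fin n)} (h : CmS σ c = CmS τ c)
    {v : Fin n} (hv : (v : ℕ) < c) : (recP c σ τ).symm v = σ.symm v := by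
  rw [recP, dif_pos h]
  exact if_pos hv

lemma recP_symm_ge {c : ℕ} {σ τ : Equiv.Perm (Fin n)} (h : CmS σ c = CmS τ c)
    {v : Fin n} (hv : ¬ (v : ℕ) < c) : (recP c σ τ).symm v = τ.symm v := by
  rw [recP, dif_pos h]
  exact if_neg hv

lemma CmS_recP_le {c : ℕ} {σ τ : Equiv.Perm (Fin n)} (h : CmS σ c = CmS τ c)
    {m : ℕ} (hm : m ≤ c) : CmS (recP c σ τ) m = CmS σ m :=
  CmS_eq_of_agree_lt (k := c) (fun v hv => recP_symm_lt h hv) hm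

lemma CmS_recP_ge {c : ℕ} {σ τ : Equiv.Perm (Fin n)} (h : CmS σ c = CmS τ c)
    {m : ℕ} (hm : c ≤ m) : CmS (recP c σ τ) m = CmS τ m :=
  CmS_eq_of_agree_ge (k := c) (fun v hv => recP_symm_ge h (by omega)) hm

lemma recP_recP {c : ℕ} {σ τ : Equiv.Perm (Fin n)} (h : CmS σ c = CmS τ c) :
    recP c (recP c σ τ) (recP c τ σ) = σ := by
  have h2 : CmS (recP c σ τ) c = CmS (recP c τ σ) c := by
    rw [CmS_recP_le h le_rfl, CmS_recP_ge h.symm le_rfl]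
  have hsymm : ∀ v : Fin n, (recP c (recP c σ τ) (recP c τ σ)).symm v = σ.symm v := by
    intro v
    by_cases hv : (v : ℕ) < c
    · rw [recP_symm_lt h2 hv, recP_symm_lt h hv]
    · rw [recP_symm_ge h2 hv, recP_symm_ge h.symm hv]
  have : (recP c (recP c σ τ) (recP c τ σ)).symm = σ.symm := Equiv.ext hsymm
  calc recP c (recP c σ τ) (recP c τ σ) = ((recP c (recP c σ τ) (recP c τ σ)).symm).symm := rfl
    _ = (σ.symm).symm := by rw [this]
    _ = σ := Equiv.symm_symm σ

/-- The key factorization identity over a recombination-closed set of permutations. -/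
lemma factor_eq {A : Fin n → Finset (Fin n) → ℝ} {c : ℕ} (hc : c ≤ n)
    {H : Finset (Equiv.Perm (Fin n))} {S : Finset (Fin n)}
    (hmem : ∀ σ ∈ H, CmS σ c = S)
    (hclosed : ∀ σ ∈ H, ∀ τ ∈ H, recP c σ τ ∈ H) :
    (H.card : ℝ) * ∑ σ ∈ H, prefP A σ n
      = (∑ σ ∈ H, prefP A σ c) * (∑ τ ∈ H, tailP A τ c) := by
  have key : ∀ σ ∈ H, ∀ τ ∈ H,
      prefP A (recP c σ τ) n = prefP A σ c * tailP A τ c := by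
    intro σ hσ τ hτ
    have h : CmS σ c = CmS τ c := (hmem σ hσ).trans (hmem τ hτ).symm
    rw [← prefP_mul_tailP (recP c σ τ) hc]
    congr 1
    · exact prefP_eq_of_agree_lt (fun v hv => recP_symm_lt h hv)
    · exact tailP_eq_of_agree_ge (fun v hv => recP_symm_ge h (by omega))
  rw [Finset.sum_mul_sum]
  calc (H.card : ℝ) * ∑ ν ∈ H, prefP A ν n
      = ∑ σ ∈ H, ∑ _τ ∈ H, prefP A σ n := by
        rw [Finset.mul_sum]
        exact Finset.sum_congr rfl fun σ _ => by
          rw [Finset.sum_const, nsmul_eq_mul]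
    _ = ∑ p ∈ H ×ˢ H, prefP A p.1 n := (Finset.sum_product (f := fun p => prefP A p.1 n) ..).symm
    _ = ∑ p ∈ H ×ˢ H, prefP A (recP c p.1 p.2) n := by
        apply Finset.sum_nbij' (i := fun p => (recP c p.1 p.2, recP c p.2 p.1))
          (j := fun p => (recP c p.1 p.2, recP c p.2 p.1))
        · intro p hp
          simp only [Finset.mem_product] at hp ⊢
          exact ⟨hclosed _ hp.1 _ hp.2, hclosed _ hp.2 _ hp.1⟩
        · intro p hp
          simp only [Finset.mem_product] at hp ⊢
          exact ⟨hclosed _ hp.1 _ hp.2, hclosed _ hp.2 _ hp.1⟩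
        · intro p hp
          simp only [Finset.mem_product] at hp
          have h : CmS p.1 c = CmS p.2 c := (hmem _ hp.1).trans (hmem _ hp.2).symm
          ext <;> simp [recP_recP h, recP_recP h.symm]
        · intro p hp
          simp only [Finset.mem_product] at hp
          have h : CmS p.1 c = CmS p.2 c := (hmem _ hp.1).trans (hmem _ hp.2).symm
          ext <;> simp [recP_recP h, recP_recP h.symm]
        · intro p hp
          simp only [Finset.mem_product] at hp
          have h : CmS p.1 c = CmS p.2 c := (hmem _ hp.1).trans (hmem _ hp.2).symm
          show prefP A p.1 n = prefP A (recP c (recP c p.1 p.2) (recP c p.2 p.1)) n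
          rw [recP_recP h]
    _ = ∑ p ∈ H ×ˢ H, prefP A p.1 c * tailP A p.2 c := by
        apply Finset.sum_congr rfl
        intro p hp
        simp only [Finset.mem_product] at hp
        exact key _ hp.1 _ hp.2
    _ = ∑ σ ∈ H, ∑ τ ∈ H, prefP A σ c * tailP A τ c :=
        Finset.sum_product (f := fun p => prefP A p.1 c * tailP A p.2 c) ..

/-! ### Fiber equality via swaps -/

lemma fiber_pre_eq {k : ℕ} {S : Finset (Fin n)} {i j : Fin n} (hi : i ∉ S) (hj : j ∉ S)
    (g : Equiv.Perm (Fin n) → ℝ)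
    (hg : ∀ σ τ : Equiv.Perm (Fin n),
      (∀ v : Fin n, (v : ℕ) < k → σ.symm v = τ.symm v) → g σ = g τ) :
    ∑ σ ∈ univ.filter (fun σ => CmS σ k = S ∧ (σ i : ℕ) = k), g σ
      = ∑ σ ∈ univ.filter (fun σ => CmS σ k = S ∧ (σ j : ℕ) = k), g σ := by
  have main : ∀ (a b : Fin n), a ∉ S → b ∉ S →
      ∀ σ : Equiv.Perm (Fin n), CmS σ k = S → (σ a : ℕ) = k →
      (CmS (σ.trans (Equiv.swap (σ a) (σ b))) k = S
        ∧ ((σ.trans (Equiv.swap (σ a) (σ b))) b : ℕ) = k) := by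
    intro a b _ hb σ hS hka
    have hσb : ¬ ((σ b : ℕ) < k) := fun hc => hb (hS ▸ mem_CmS.2 hc)
    refine ⟨?_, ?_⟩
    · rw [← hS]
      ext x
      simp only [mem_CmS, Equiv.trans_apply]
      by_cases h1 : σ x = σ a
      · rw [h1, Equiv.swap_apply_left]
        have hx : x = a := σ.injective h1
        subst hx
        omega
      · by_cases h2 : σ x = σ b
        · rw [h2, Equiv.swap_apply_right]
          have hx : x = b := σ.injective h2
          subst hx
          omega
        · rw [Equiv.swap_apply_of_ne_of_ne h1 h2]
    · simp only [Equiv.trans_apply, Equiv.swap_apply_right]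
      exact hka
  have ginv : ∀ (a b : Fin n), a ∉ S → b ∉ S →
      ∀ σ : Equiv.Perm (Fin n), CmS σ k = S → (σ a : ℕ) = k →
      g (σ.trans (Equiv.swap (σ a) (σ b))) = g σ := by
    intro a b _ hb σ hS hka
    have hσb : ¬ ((σ b : ℕ) < k) := fun hc => hb (hS ▸ mem_CmS.2 hc)
    apply hg
    intro v hv
    have h1 : v ≠ σ a := by intro hc; rw [hc, hka] at hv; omega
    have h2 : v ≠ σ b := by intro hc; rw [hc] at hv; exact hσb hv
    rw [Equiv.symm_trans_apply, Equiv.symm_swap, Equiv.swap_apply_of_ne_of_ne h1 h2]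
  apply Finset.sum_nbij' (i := fun σ => σ.trans (Equiv.swap (σ i) (σ j)))
    (j := fun σ => σ.trans (Equiv.swap (σ j) (σ i)))
  · intro σ hσ
    simp only [Finset.mem_filter, Finset.mem_univ, true_and] at hσ ⊢
    exact main i j hi hj σ hσ.1 hσ.2
  · intro σ hσ
    simp only [Finset.mem_filter, Finset.mem_univ, true_and] at hσ ⊢
    exact main j i hj hi σ hσ.1 hσ.2
  · intro σ _
    ext x
    simp [Equiv.trans_apply, Equiv.swap_apply_left, Equiv.swap_apply_right,
      Equiv.swap_apply_self]
  · intro σ _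
    ext x
    simp [Equiv.trans_apply, Equiv.swap_apply_left, Equiv.swap_apply_right,
      Equiv.swap_apply_self]
  · intro σ hσ
    simp only [Finset.mem_filter, Finset.mem_univ, true_and] at hσ
    exact (ginv i j hi hj σ hσ.1 hσ.2).symm

lemma fiber_tail_eq {k : ℕ} {T : Finset (Fin n)} {i j : Fin n} (hi : i ∈ T) (hj : j ∈ T)
    (g : Equiv.Perm (Fin n) → ℝ)
    (hg : ∀ σ τ : Equiv.Perm (Fin n),
      (∀ v : Fin n, k + 1 ≤ (v : ℕ) → σ.symm v = τ.symm v) → g σ = g τ) :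
    ∑ σ ∈ univ.filter (fun σ => CmS σ (k + 1) = T ∧ (σ i : ℕ) = k), g σ
      = ∑ σ ∈ univ.filter (fun σ => CmS σ (k + 1) = T ∧ (σ j : ℕ) = k), g σ := by
  have main : ∀ (a b : Fin n), a ∈ T → b ∈ T →
      ∀ σ : Equiv.Perm (Fin n), CmS σ (k + 1) = T → (σ a : ℕ) = k →
      (CmS (σ.trans (Equiv.swap (σ a) (σ b))) (k + 1) = T
        ∧ ((σ.trans (Equiv.swap (σ a) (σ b))) b : ℕ) = k) := by
    intro a b _ hb σ hS hka
    have hσb : ((σ b : ℕ) < k + 1) := by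
      have := hS ▸ hb
      exact mem_CmS.1 this
    refine ⟨?_, ?_⟩
    · rw [← hS]
      ext x
      simp only [mem_CmS, Equiv.trans_apply]
      by_cases h1 : σ x = σ a
      · rw [h1, Equiv.swap_apply_left]
        have hx : x = a := σ.injective h1
        subst hx
        omega
      · by_cases h2 : σ x = σ b
        · rw [h2, Equiv.swap_apply_right]
          have hx : x = b := σ.injective h2
          subst hx
          omega
        · rw [Equiv.swap_apply_of_ne_of_ne h1 h2]
    · simp only [Equiv.trans_apply, Equiv.swap_apply_right]
      exact hka
  have ginv : ∀ (a b : Fin n), a ∈ T → b ∈ T →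
      ∀ σ : Equiv.Perm (Fin n), CmS σ (k + 1) = T → (σ a : ℕ) = k →
      g (σ.trans (Equiv.swap (σ a) (σ b))) = g σ := by
    intro a b _ hb σ hS hka
    have hσb : ((σ b : ℕ) < k + 1) := mem_CmS.1 (hS ▸ hb)
    apply hg
    intro v hv
    have h1 : v ≠ σ a := by intro hc; rw [hc, hka] at hv; omega
    have h2 : v ≠ σ b := by intro hc; rw [hc] at hv; omega
    rw [Equiv.symm_trans_apply, Equiv.symm_swap, Equiv.swap_apply_of_ne_of_ne h1 h2]
  apply Finset.sum_nbij' (i := fun σ => σ.trans (Equiv.swap (σ i) (σ j)))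
    (j := fun σ => σ.trans (Equiv.swap (σ j) (σ i)))
  · intro σ hσ
    simp only [Finset.mem_filter, Finset.mem_univ, true_and] at hσ ⊢
    exact main i j hi hj σ hσ.1 hσ.2
  · intro σ hσ
    simp only [Finset.mem_filter, Finset.mem_univ, true_and] at hσ ⊢
    exact main j i hj hi σ hσ.1 hσ.2
  · intro σ _
    ext x
    simp [Equiv.trans_apply, Equiv.swap_apply_left, Equiv.swap_apply_right,
      Equiv.swap_apply_self]
  · intro σ _
    ext x
    simp [Equiv.trans_apply, Equiv.swap_apply_left, Equiv.swap_apply_right,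
      Equiv.swap_apply_self]
  · intro σ hσ
    simp only [Finset.mem_filter, Finset.mem_univ, true_and] at hσ
    exact (ginv i j hi hj σ hσ.1 hσ.2).symm

/-! ### Grouping and filter rewriting -/

lemma symm_eq_iff {k : ℕ} (hk : k < n) {σ : Equiv.Perm (Fin n)} {x : Fin n} :
    σ.symm ⟨k, hk⟩ = x ↔ (σ x : ℕ) = k := by
  rw [Equiv.symm_apply_eq]
  constructor
  · intro h; rw [← h]
  · intro h; exact Fin.ext h.symm

lemma sum_group {k : ℕ} (hk : k < n) (P : Equiv.Perm (Fin n) → Prop) [DecidablePred P]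
    (g : Equiv.Perm (Fin n) → ℝ) :
    ∑ σ ∈ univ.filter P, g σ
      = ∑ x : Fin n, ∑ σ ∈ univ.filter (fun σ => P σ ∧ (σ x : ℕ) = k), g σ := by
  rw [← Finset.sum_fiberwise_of_maps_to (g := fun σ : Equiv.Perm (Fin n) => σ.symm ⟨k, hk⟩)
    (t := univ) (fun σ _ => mem_univ _) g]
  apply Finset.sum_congr rfl
  intro x _
  rw [Finset.filter_filter]
  apply Finset.sum_congr _ (fun _ _ => rfl)
  apply Finset.filter_congr
  intro σ _
  simp only [symm_eq_iff hk]

lemma fiber_cond_insert {k : ℕ} (hk : k < n) {W : Finset (Fin n)} {x : Fin n} (hx : x ∉ W) :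
    (univ.filter (fun σ : Equiv.Perm (Fin n) => CmS σ k = W ∧ (σ x : ℕ) = k))
      = univ.filter (fun σ => CmS σ (k + 1) = insert x W ∧ (σ x : ℕ) = k) := by
  apply Finset.filter_congr
  intro σ _
  constructor
  · rintro ⟨h1, h2⟩
    refine ⟨?_, h2⟩
    rw [CmS_succ σ hk, (symm_eq_iff hk).2 h2, h1]
  · rintro ⟨h1, h2⟩
    refine ⟨?_, h2⟩
    rw [CmS_succ σ hk, (symm_eq_iff hk).2 h2] at h1
    have hx2 : x ∉ CmS σ k := by
      simp [mem_CmS, h2]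
    calc CmS σ k = (insert x (CmS σ k)).erase x := (Finset.erase_insert hx2).symm
      _ = (insert x W).erase x := by rw [h1]
      _ = W := Finset.erase_insert hx

lemma fiber_empty_mem {k : ℕ} {S : Finset (Fin n)} {x : Fin n} (hx : x ∈ S) :
    (univ.filter (fun σ : Equiv.Perm (Fin n) => CmS σ k = S ∧ (σ x : ℕ) = k)) = ∅ := by
  apply Finset.filter_eq_empty_iff.2
  intro σ _
  rintro ⟨h1, h2⟩
  rw [← h1] at hx
  rw [mem_CmS] at hx
  omega

lemma fiber_empty_notMem {k : ℕ} {T : Finset (Fin n)} {x : Fin n} (hx : x ∉ T) :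
    (univ.filter (fun σ : Equiv.Perm (Fin n) => CmS σ (k + 1) = T ∧ (σ x : ℕ) = k)) = ∅ := by
  apply Finset.filter_eq_empty_iff.2
  intro σ _
  rintro ⟨h1, h2⟩
  apply hx
  rw [← h1, mem_CmS]
  omega

lemma stepw_on_fiber {A : Fin n → Finset (Fin n) → ℝ} {k : ℕ} (hk : k < n)
    {σ : Equiv.Perm (Fin n)} {x : Fin n} (h2 : (σ x : ℕ) = k) :
    stepw A σ k = wA A x (CmS σ k) := by
  rw [stepw, dif_pos hk, (symm_eq_iff hk).2 h2]

/-! ### Flow hypotheses -/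

variable {A : Fin n → Finset (Fin n) → ℝ}

noncomputable def DDA (A : Fin n → Finset (Fin n) → ℝ) (S : Finset (Fin n)) : ℝ :=
  if S = univ then 1 else FA A S

section flow

variable (hp : ∀ (i : Fin n) (S : Finset (Fin n)), i ∉ S → 0 ≤ pA A i S)
  (hcons : ∀ T : Finset (Fin n), T ≠ ∅ → ∑ i ∈ T, pA A i (T.erase i) = DDA A T)
  (hF0 : FA A ∅ = 1)

include hp in
lemma FA_nonneg (S : Finset (Fin n)) : 0 ≤ FA A S :=
  Finset.sum_nonneg fun i hi => hp i S (by simpa using hi)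

include hp in
lemma pA_le_FA {i : Fin n} {S : Finset (Fin n)} (hi : i ∉ S) : pA A i S ≤ FA A S :=
  Finset.single_le_sum (f := fun j => pA A j S)
    (fun j hj => hp j S (by simpa using hj)) (by simpa using hi)

include hp hcons in
lemma good_step {i : Fin n} {S : Finset (Fin n)} (hi : i ∉ S) (hpa : 0 < pA A i S) :
    insert i S = univ ∨ 0 < FA A (insert i S) := by
  by_cases hu : insert i S = univ
  · exact Or.inl hu
  · right
    have hne : insert i S ≠ ∅ := by simp
    have h1 := hcons (insert i S) hne
    rw [DDA, if_neg hu] at h1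
    have h2 : pA A i ((insert i S).erase i) ≤ ∑ j ∈ insert i S, pA A j ((insert i S).erase j) := by
      apply Finset.single_le_sum (f := fun j => pA A j ((insert i S).erase j))
      · intro j hj
        exact hp j _ (Finset.notMem_erase j _)
      · exact Finset.mem_insert_self i S
    rw [Finset.erase_insert hi] at h2
    rw [h1] at h2
    exact lt_of_lt_of_le hpa h2

include hp in
lemma wA_nonneg (i : Fin n) (S : Finset (Fin n)) (hi : i ∉ S) : 0 ≤ wA A i S :=
  div_nonneg (hp i S hi) (FA_nonneg hp S)

/-! ### The three inductions -/

include hp hcons in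
lemma tlh : ∀ d k, k + d = n → ∀ S : Finset (Fin n), S.card = k →
    (S = univ ∨ 0 < FA A S) →
    ∑ σ ∈ univ.filter (fun σ => CmS σ k = S), tailP A σ k = (k.factorial : ℝ) := by
  intro d
  induction d with
  | zero =>
    intro k hkn S hcard _
    have hk : k = n := by omega
    have hS : S = univ := Finset.eq_univ_of_card S (by rw [hcard, hk, Fintype.card_fin])
    have h2 : univ.filter (fun σ : Equiv.Perm (Fin n) => CmS σ k = S) = univ := by
      apply Finset.filter_true_of_mem
      intro σ _
      rw [hk, CmS_univ, hS]
    have h1 : ∀ σ ∈ (univ : Finset (Equiv.Perm (Fin n))), tailP A σ k = 1 := by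
      intro σ _
      rw [tailP, hk, Finset.Ico_self, Finset.prod_empty]
    rw [h2, Finset.sum_congr rfl h1, Finset.sum_const, nsmul_eq_mul, mul_one,
      Finset.card_univ, Fintype.card_perm, Fintype.card_fin, hk]
  | succ d ih =>
    intro k hkn S hcard hGood
    have hk : k < n := by omega
    have hSu : S ≠ univ := by
      intro hc; subst hc
      rw [Finset.card_univ, Fintype.card_fin] at hcard
      omega
    have hF : 0 < FA A S := hGood.resolve_left hSu
    rw [sum_group hk _ (fun σ => tailP A σ k)]
    have inner : ∀ x : Fin n,
        (∑ σ ∈ univ.filter (fun σ => CmS σ k = S ∧ (σ x : ℕ) = k), tailP A σ k)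
          = if x ∈ S then 0 else wA A x S * (k.factorial : ℝ) := by
      intro x
      by_cases hx : x ∈ S
      · rw [if_pos hx, fiber_empty_mem hx, Finset.sum_empty]
      · rw [if_neg hx]
        have hfac : ∀ σ ∈ univ.filter (fun σ => CmS σ k = S ∧ (σ x : ℕ) = k),
            tailP A σ k = wA A x S * tailP A σ (k + 1) := by
          intro σ hσ
          simp only [Finset.mem_filter, Finset.mem_univ, true_and] at hσ
          rw [tailP_succ σ hk, stepw_on_fiber hk hσ.2, hσ.1]
        rw [Finset.sum_congr rfl hfac, ← Finset.mul_sum]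
        rcases eq_or_lt_of_le (hp x S hx) with hzero | hpos
        · rw [wA, ← hzero, zero_div, zero_mul, zero_mul]
        · congr 1
          -- Z = k!
          set T := insert x S with hT
          have hTcard : T.card = k + 1 := by
            rw [hT, Finset.card_insert_of_notMem hx, hcard]
          have hxT : x ∈ T := Finset.mem_insert_self x S
          have hTGood : T = univ ∨ 0 < FA A T := good_step hp hcons hx hpos
          have hfull := ih (k + 1) (by omega) T hTcard hTGood
          rw [sum_group (k := k) hk _ (fun σ => tailP A σ (k + 1))] at hfull
          have hinner2 : ∀ y : Fin n,
              (∑ σ ∈ univ.filter (fun σ => CmS σ (k + 1) = T ∧ (σ y : ℕ) = k),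
                tailP A σ (k + 1))
              = if y ∈ T then
                  (∑ σ ∈ univ.filter (fun σ => CmS σ (k + 1) = T ∧ (σ x : ℕ) = k),
                    tailP A σ (k + 1))
                else 0 := by
            intro y
            by_cases hy : y ∈ T
            · rw [if_pos hy]
              exact fiber_tail_eq hy hxT _
                (fun σ τ h => tailP_eq_of_agree_ge h)
            · rw [if_neg hy, fiber_empty_notMem hy, Finset.sum_empty]
          rw [Finset.sum_congr rfl (fun y _ => hinner2 y), Finset.sum_ite_mem,
            Finset.univ_inter, Finset.sum_const, hTcard, nsmul_eq_mul] at hfull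
          rw [← fiber_cond_insert hk hx] at hfull
          have hcast : ((k + 1).factorial : ℝ) = (k + 1) * (k.factorial : ℝ) := by
            rw [Nat.factorial_succ]; push_cast; ring
          rw [hcast] at hfull
          have hne : ((k : ℝ) + 1) ≠ 0 := by positivity
          push_cast at hfull
          exact mul_left_cancel₀ hne hfull
    rw [Finset.sum_congr rfl (fun x _ => inner x)]
    rw [Finset.sum_ite, Finset.sum_const_zero, zero_add]
    have hcompl : univ.filter (fun x => x ∉ S) = Sᶜ := by
      ext x; simp
    rw [hcompl]
    have : ∑ x ∈ Sᶜ, wA A x S * (k.factorial : ℝ)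
        = (∑ x ∈ Sᶜ, pA A x S) / FA A S * (k.factorial : ℝ) := by
      rw [Finset.sum_div, Finset.sum_mul]
      apply Finset.sum_congr rfl
      intro x _
      rw [wA]
    rw [this]
    rw [show (∑ x ∈ Sᶜ, pA A x S) = FA A S from rfl, div_self (ne_of_gt hF), one_mul]

lemma fiber_from_full {k : ℕ} (hk : k < n) {S : Finset (Fin n)} {x : Fin n} (hx : x ∉ S)
    (g : Equiv.Perm (Fin n) → ℝ)
    (hg : ∀ σ τ : Equiv.Perm (Fin n),
      (∀ v : Fin n, (v : ℕ) < k → σ.symm v = τ.symm v) → g σ = g τ) :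
    ((Sᶜ.card : ℝ)) * (∑ σ ∈ univ.filter (fun σ => CmS σ k = S ∧ (σ x : ℕ) = k), g σ)
      = ∑ σ ∈ univ.filter (fun σ => CmS σ k = S), g σ := by
  conv_rhs => rw [sum_group hk _ g]
  have inner : ∀ y : Fin n,
      (∑ σ ∈ univ.filter (fun σ => CmS σ k = S ∧ (σ y : ℕ) = k), g σ)
        = if y ∈ Sᶜ then
            (∑ σ ∈ univ.filter (fun σ => CmS σ k = S ∧ (σ x : ℕ) = k), g σ)
          else 0 := by
    intro y
    by_cases hy : y ∈ S
    · rw [if_neg (by simpa using hy), fiber_empty_mem hy, Finset.sum_empty]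
    · rw [if_pos (by simpa using hy)]
      exact fiber_pre_eq hy hx g hg
  rw [Finset.sum_congr rfl (fun y _ => inner y), Finset.sum_ite_mem, Finset.univ_inter,
    Finset.sum_const, nsmul_eq_mul]

include hp hcons hF0 in
lemma plh (hn : 0 < n) : ∀ k, k ≤ n → ∀ S : Finset (Fin n), S.card = k →
    ∑ σ ∈ univ.filter (fun σ => CmS σ k = S), prefP A σ k
      = (((n - k).factorial : ℕ) : ℝ) * DDA A S := by
  intro k
  induction k with
  | zero =>
    intro _ S hcard
    have hS : S = ∅ := Finset.card_eq_zero.1 hcard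
    subst hS
    have h2 : univ.filter (fun σ : Equiv.Perm (Fin n) => CmS σ 0 = ∅) = univ :=
      Finset.filter_true_of_mem (fun σ _ => CmS_zero σ)
    have h1 : ∀ σ ∈ (univ : Finset (Equiv.Perm (Fin n))), prefP A σ 0 = 1 := by
      intro σ _
      rw [prefP, Finset.range_zero, Finset.prod_empty]
    have hD : DDA A (∅ : Finset (Fin n)) = 1 := by
      rw [DDA, if_neg, hF0]
      intro hc
      have := congrArg Finset.card hc
      simp at this
      omega
    rw [h2, Finset.sum_congr rfl h1, Finset.sum_const, nsmul_eq_mul, mul_one, hD,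
      Finset.card_univ, Fintype.card_perm, Fintype.card_fin, Nat.sub_zero, mul_one]
  | succ k ih =>
    intro hk1 S hcard
    have hk : k < n := by omega
    have hSne : S ≠ ∅ := by
      intro hc; rw [hc] at hcard; simp at hcard
    set m := n - (k + 1) with hm
    have hnk : n - k = m + 1 := by omega
    rw [sum_group hk _ (fun σ => prefP A σ (k + 1))]
    have inner : ∀ x : Fin n,
        (∑ σ ∈ univ.filter (fun σ => CmS σ (k + 1) = S ∧ (σ x : ℕ) = k),
          prefP A σ (k + 1))
        = if x ∈ S then ((m.factorial : ℕ) : ℝ) * pA A x (S.erase x) else 0 := by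
      intro x
      by_cases hx : x ∈ S
      · rw [if_pos hx]
        have hx' : x ∉ S.erase x := Finset.notMem_erase x S
        have hset : (univ.filter (fun σ : Equiv.Perm (Fin n) =>
            CmS σ (k + 1) = S ∧ (σ x : ℕ) = k))
            = univ.filter (fun σ => CmS σ k = S.erase x ∧ (σ x : ℕ) = k) := by
          rw [fiber_cond_insert hk hx', Finset.insert_erase hx]
        rw [hset]
        have hfac : ∀ σ ∈ univ.filter (fun σ : Equiv.Perm (Fin n) =>
            CmS σ k = S.erase x ∧ (σ x : ℕ) = k),
            prefP A σ (k + 1) = prefP A σ k * wA A x (S.erase x) := by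
          intro σ hσ
          simp only [Finset.mem_filter, Finset.mem_univ, true_and] at hσ
          rw [prefP_succ, stepw_on_fiber hk hσ.2, hσ.1]
        rw [Finset.sum_congr rfl hfac, ← Finset.sum_mul]
        have hcard' : (S.erase x).card = k := by
          rw [Finset.card_erase_of_mem hx, hcard]
          omega
        have hfull := ih (by omega) (S.erase x) hcard'
        rw [← fiber_from_full hk hx' (fun σ => prefP A σ k)
          (fun σ τ h => prefP_eq_of_agree_lt h)] at hfull
        have hcc : (((S.erase x)ᶜ.card : ℕ) : ℝ) = ((m : ℝ) + 1) := by
          rw [Finset.card_compl, hcard', Fintype.card_fin, hnk]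
          push_cast
          ring
        rw [hcc, hnk, Nat.factorial_succ] at hfull
        have hne : ((m : ℝ) + 1) ≠ 0 := by positivity
        have hDe : DDA A (S.erase x) = FA A (S.erase x) := by
          rw [DDA, if_neg]
          intro hc
          have := congrArg Finset.card hc
          rw [hcard', Finset.card_univ, Fintype.card_fin] at this
          omega
        have hW : (∑ σ ∈ univ.filter (fun σ : Equiv.Perm (Fin n) =>
            CmS σ k = S.erase x ∧ (σ x : ℕ) = k), prefP A σ k)
            = ((m.factorial : ℕ) : ℝ) * FA A (S.erase x) := by
          apply mul_left_cancel₀ hne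
          rw [hfull, hDe]
          push_cast
          ring
        rw [hW]
        rcases eq_or_lt_of_le (FA_nonneg hp (S.erase x)) with hzero | hpos
        · have hpz : pA A x (S.erase x) = 0 :=
            le_antisymm (le_trans (pA_le_FA hp hx') (le_of_eq hzero.symm)) (hp x _ hx')
          rw [← hzero, hpz]
          ring
        · have : FA A (S.erase x) * wA A x (S.erase x) = pA A x (S.erase x) := by
            rw [wA, mul_comm]
            exact div_mul_cancel₀ _ (ne_of_gt hpos)
          rw [mul_assoc, this]
      · rw [if_neg hx, fiber_empty_notMem hx, Finset.sum_empty]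
    rw [Finset.sum_congr rfl (fun x _ => inner x), Finset.sum_ite_mem, Finset.univ_inter,
      ← Finset.mul_sum, hcons S hSne]

lemma sum_one_HS : ∀ k, k ≤ n → ∀ S : Finset (Fin n), S.card = k →
    (∑ _σ ∈ univ.filter (fun σ : Equiv.Perm (Fin n) => CmS σ k = S), (1 : ℝ))
      = (k.factorial : ℝ) * ((n - k).factorial : ℝ) := by
  intro k
  induction k with
  | zero =>
    intro _ S hcard
    have hS : S = ∅ := Finset.card_eq_zero.1 hcard
    subst hS
    have h2 : univ.filter (fun σ : Equiv.Perm (Fin n) => CmS σ 0 = ∅) = univ :=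
      Finset.filter_true_of_mem (fun σ _ => CmS_zero σ)
    rw [h2, Finset.sum_const, nsmul_eq_mul, mul_one, Finset.card_univ, Fintype.card_perm,
      Fintype.card_fin]
    simp
  | succ k ih =>
    intro hk1 S hcard
    have hk : k < n := by omega
    set m := n - (k + 1) with hm
    have hnk : n - k = m + 1 := by omega
    rw [sum_group hk _ (fun _ => (1 : ℝ))]
    have inner : ∀ x : Fin n,
        (∑ _σ ∈ univ.filter (fun σ : Equiv.Perm (Fin n) =>
            CmS σ (k + 1) = S ∧ (σ x : ℕ) = k), (1 : ℝ))
        = if x ∈ S then (k.factorial : ℝ) * (m.factorial : ℝ) else 0 := by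
      intro x
      by_cases hx : x ∈ S
      · rw [if_pos hx]
        have hx' : x ∉ S.erase x := Finset.notMem_erase x S
        have hset : (univ.filter (fun σ : Equiv.Perm (Fin n) =>
            CmS σ (k + 1) = S ∧ (σ x : ℕ) = k))
            = univ.filter (fun σ => CmS σ k = S.erase x ∧ (σ x : ℕ) = k) := by
          rw [fiber_cond_insert hk hx', Finset.insert_erase hx]
        rw [hset]
        have hcard' : (S.erase x).card = k := by
          rw [Finset.card_erase_of_mem hx, hcard]
          omega
        have hfull := ih (by omega) (S.erase x) hcard'
        rw [← fiber_from_full hk hx' (fun _ => (1 : ℝ)) (fun _ _ _ => rfl)] at hfull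
        have hcc : (((S.erase x)ᶜ.card : ℕ) : ℝ) = ((m : ℝ) + 1) := by
          rw [Finset.card_compl, hcard', Fintype.card_fin, hnk]
          push_cast
          ring
        rw [hcc, hnk, Nat.factorial_succ] at hfull
        have hne : ((m : ℝ) + 1) ≠ 0 := by positivity
        apply mul_left_cancel₀ hne
        rw [hfull]
        push_cast
        ring
      · rw [if_neg hx, fiber_empty_notMem hx, Finset.sum_empty]
    rw [Finset.sum_congr rfl (fun x _ => inner x), Finset.sum_ite_mem, Finset.univ_inter,
      Finset.sum_const, hcard, nsmul_eq_mul, Nat.factorial_succ]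
    push_cast
    ring

lemma sum_one_fiber {k : ℕ} (hk : k < n) {S : Finset (Fin n)} (hcard : S.card = k)
    {x : Fin n} (hx : x ∉ S) :
    (∑ _σ ∈ univ.filter (fun σ : Equiv.Perm (Fin n) =>
        CmS σ k = S ∧ (σ x : ℕ) = k), (1 : ℝ))
      = (k.factorial : ℝ) * ((n - k - 1).factorial : ℝ) := by
  have hfull := sum_one_HS k (by omega) S hcard
  rw [← fiber_from_full hk hx (fun _ => (1 : ℝ)) (fun _ _ _ => rfl)] at hfull
  set m := n - k - 1 with hm
  have hnk : n - k = m + 1 := by omega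
  have hcc : ((Sᶜ.card : ℕ) : ℝ) = ((m : ℝ) + 1) := by
    rw [Finset.card_compl, hcard, Fintype.card_fin, hnk]
    push_cast
    ring
  rw [hcc, hnk, Nat.factorial_succ] at hfull
  have hne : ((m : ℝ) + 1) ≠ 0 := by positivity
  apply mul_left_cancel₀ hne
  rw [hfull]
  push_cast
  ring

include hp hcons hF0 in
lemma total_mass (hn : 0 < n) :
    ∑ σ ∈ (univ : Finset (Equiv.Perm (Fin n))), prefP A σ n = 1 := by
  have h := plh hp hcons hF0 hn n le_rfl univ (by rw [Finset.card_univ, Fintype.card_fin])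
  have h2 : univ.filter (fun σ : Equiv.Perm (Fin n) => CmS σ n = univ) = univ :=
    Finset.filter_true_of_mem (fun σ _ => CmS_univ σ)
  rw [h2] at h
  rw [h, DDA, if_pos rfl, Nat.sub_self]
  simp

include hp hcons hF0 in
lemma eta (hn : 0 < n) {k : ℕ} (hk : k < n) {S : Finset (Fin n)} (hcard : S.card = k)
    {i : Fin n} (hi : i ∉ S) :
    ∑ σ ∈ univ.filter (fun σ : Equiv.Perm (Fin n) => CmS σ k = S ∧ (σ i : ℕ) = k),
      prefP A σ n = pA A i S := by
  rcases eq_or_lt_of_le (hp i S hi) with hzero | hpos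
  · have hterm : ∀ σ ∈ univ.filter (fun σ : Equiv.Perm (Fin n) =>
        CmS σ k = S ∧ (σ i : ℕ) = k), prefP A σ n = 0 := by
      intro σ hσ
      simp only [Finset.mem_filter, Finset.mem_univ, true_and] at hσ
      apply Finset.prod_eq_zero (Finset.mem_range.2 hk)
      rw [stepw_on_fiber hk hσ.2, hσ.1, wA, ← hzero, zero_div]
    rw [Finset.sum_congr rfl hterm, Finset.sum_const_zero, ← hzero]
  · have hFS : 0 < FA A S := lt_of_lt_of_le hpos (pA_le_FA hp hi)
    set T := insert i S with hT
    have hTcard : T.card = k + 1 := by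
      rw [hT, Finset.card_insert_of_notMem hi, hcard]
    have hiT : i ∈ T := Finset.mem_insert_self i S
    have hTGood : T = univ ∨ 0 < FA A T := good_step hp hcons hi hpos
    have hE : (univ.filter (fun σ : Equiv.Perm (Fin n) => CmS σ k = S ∧ (σ i : ℕ) = k))
        = univ.filter (fun σ => CmS σ (k + 1) = T ∧ (σ i : ℕ) = k) :=
      fiber_cond_insert hk hi
    -- factorization
    have hfac := factor_eq (A := A) (c := k + 1) (by omega)
      (H := univ.filter (fun σ : Equiv.Perm (Fin n) => CmS σ k = S ∧ (σ i : ℕ) = k))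
      (S := T)
      (by
        intro σ hσ
        rw [hE] at hσ
        simp only [Finset.mem_filter, Finset.mem_univ, true_and] at hσ
        exact hσ.1)
      (by
        intro σ hσ τ hτ
        rw [hE] at hσ hτ ⊢
        simp only [Finset.mem_filter, Finset.mem_univ, true_and] at hσ hτ ⊢
        have hcm : CmS σ (k + 1) = CmS τ (k + 1) := hσ.1.trans hτ.1.symm
        constructor
        · rw [CmS_recP_le hcm le_rfl, hσ.1]
        · have h1 : (recP (k + 1) σ τ).symm ⟨k, hk⟩ = σ.symm ⟨k, hk⟩ :=
            recP_symm_lt hcm (show ((⟨k, hk⟩ : Fin n) : ℕ) < k + 1 by simp)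
          rw [← symm_eq_iff hk, h1, symm_eq_iff hk]
          exact hσ.2)
    -- tail sum
    have htail : (∑ σ ∈ univ.filter (fun σ : Equiv.Perm (Fin n) =>
        CmS σ k = S ∧ (σ i : ℕ) = k), tailP A σ (k + 1))
        = (k.factorial : ℝ) := by
      have hfull := tlh hp hcons (n - (k + 1)) (k + 1) (by omega) T hTcard hTGood
      rw [sum_group (k := k) hk _ (fun σ => tailP A σ (k + 1))] at hfull
      have hinner : ∀ y : Fin n,
          (∑ σ ∈ univ.filter (fun σ : Equiv.Perm (Fin n) =>
              CmS σ (k + 1) = T ∧ (σ y : ℕ) = k), tailP A σ (k + 1))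
          = if y ∈ T then
              (∑ σ ∈ univ.filter (fun σ : Equiv.Perm (Fin n) =>
                CmS σ (k + 1) = T ∧ (σ i : ℕ) = k), tailP A σ (k + 1))
            else 0 := by
        intro y
        by_cases hy : y ∈ T
        · rw [if_pos hy]
          exact fiber_tail_eq hy hiT _ (fun σ τ h => tailP_eq_of_agree_ge h)
        · rw [if_neg hy, fiber_empty_notMem hy, Finset.sum_empty]
      rw [Finset.sum_congr rfl (fun y _ => hinner y), Finset.sum_ite_mem,
        Finset.univ_inter, Finset.sum_const, hTcard, nsmul_eq_mul] at hfull
      rw [hE]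
      have hcast : ((k + 1).factorial : ℝ) = ((k : ℝ) + 1) * (k.factorial : ℝ) := by
        rw [Nat.factorial_succ]; push_cast; ring
      rw [hcast] at hfull
      have hne : ((k : ℝ) + 1) ≠ 0 := by positivity
      push_cast at hfull
      exact mul_left_cancel₀ hne hfull
    -- prefix sum
    set m := n - k - 1 with hm
    have hnk : n - k = m + 1 := by omega
    have hpre : (∑ σ ∈ univ.filter (fun σ : Equiv.Perm (Fin n) =>
        CmS σ k = S ∧ (σ i : ℕ) = k), prefP A σ (k + 1))
        = (m.factorial : ℝ) * pA A i S := by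
      have hfac2 : ∀ σ ∈ univ.filter (fun σ : Equiv.Perm (Fin n) =>
          CmS σ k = S ∧ (σ i : ℕ) = k),
          prefP A σ (k + 1) = prefP A σ k * wA A i S := by
        intro σ hσ
        simp only [Finset.mem_filter, Finset.mem_univ, true_and] at hσ
        rw [prefP_succ, stepw_on_fiber hk hσ.2, hσ.1]
      rw [Finset.sum_congr rfl hfac2, ← Finset.sum_mul]
      have hfull := plh hp hcons hF0 hn k (by omega) S hcard
      rw [← fiber_from_full hk hi (fun σ => prefP A σ k)
        (fun σ τ h => prefP_eq_of_agree_lt h)] at hfull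
      have hcc : ((Sᶜ.card : ℕ) : ℝ) = ((m : ℝ) + 1) := by
        rw [Finset.card_compl, hcard, Fintype.card_fin, hnk]
        push_cast
        ring
      have hDe : DDA A S = FA A S := by
        rw [DDA, if_neg]
        intro hc
        exact hi (hc ▸ Finset.mem_univ i)
      rw [hcc, hnk, Nat.factorial_succ, hDe] at hfull
      have hne : ((m : ℝ) + 1) ≠ 0 := by positivity
      have hW : (∑ σ ∈ univ.filter (fun σ : Equiv.Perm (Fin n) =>
          CmS σ k = S ∧ (σ i : ℕ) = k), prefP A σ k)
          = (m.factorial : ℝ) * FA A S := by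
        apply mul_left_cancel₀ hne
        rw [hfull]
        push_cast
        ring
      rw [hW, mul_assoc]
      congr 1
      rw [wA, mul_comm]
      exact div_mul_cancel₀ _ (ne_of_gt hFS)
    have hcardE := sum_one_fiber hk hcard hi
    rw [Finset.sum_const, nsmul_eq_mul, mul_one] at hcardE
    rw [hcardE, htail, hpre] at hfac
    have hne2 : (k.factorial : ℝ) * ((m).factorial : ℝ) ≠ 0 := by
      rw [hm]
      positivity
    have hgoal := hfac
    -- (k! * m!) * X = (m! * pA) * k!
    apply mul_left_cancel₀ hne2
    rw [mul_assoc] at hgoal ⊢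
    rw [hgoal]
    ring

end flow

/-! ### Game-theoretic consequences of Reasonableness and Efficiency -/

section games

variable {A : Fin n → Finset (Fin n) → ℝ}

lemma margMin_nonneg {v : Finset (Fin n) → ℝ} (hv : MonotoneCF v) (i : Fin n) :
    0 ≤ margMin i v := by
  have hmem := Finset.min'_mem
    (((univ.filter (fun S : Finset (Fin n) => i ∉ S)).image
      (fun S => v (insert i S) - v S))) (Finset.Nonempty.image ⟨∅, by simp⟩ _)
  rw [Finset.mem_image] at hmem
  obtain ⟨S, _, hS⟩ := hmem
  rw [margMin, ← hS]
  have := hv S (insert i S) (Finset.subset_insert i S)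
  linarith

lemma alloc_eq_const (hR : Reasonable A) {v : Finset (Fin n) → ℝ} (hv : MonotoneCF v)
    (i : Fin n) {c : ℝ} (hc : ∀ S : Finset (Fin n), i ∉ S → v (insert i S) - v S = c) :
    alloc A i v = c := by
  obtain ⟨h1, h2⟩ := hR v hv i
  have hmem : ∀ x ∈ ((univ.filter (fun S : Finset (Fin n) => i ∉ S)).image
      (fun S => v (insert i S) - v S)), x = c := by
    intro x hx
    rw [Finset.mem_image] at hx
    obtain ⟨S, hS, hxx⟩ := hx
    rw [← hxx]
    exact hc S (by simpa using hS)
  have hcmem : c ∈ ((univ.filter (fun S : Finset (Fin n) => i ∉ S)).image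
      (fun S => v (insert i S) - v S)) := by
    rw [Finset.mem_image]
    exact ⟨∅, by simp, hc ∅ (by simp)⟩
  have hmin : margMin i v = c :=
    le_antisymm (Finset.min'_le _ c hcmem)
      (Finset.le_min' _ _ _ (fun x hx => (hmem x hx) ▸ le_rfl))
  have hmax : margMax i v = c :=
    le_antisymm (Finset.max'_le _ _ _ (fun x hx => (hmem x hx) ▸ le_rfl))
      (Finset.le_max' _ c hcmem)
  rw [hmin] at h1
  rw [hmax] at h2
  linarith

lemma alloc_indicator (i : Fin n) (p : Finset (Fin n) → Prop) [DecidablePred p] :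
    alloc A i (fun S => if p S then (1 : ℝ) else 0) = ∑ S ∈ univ.filter p, A i S := by
  rw [alloc, Finset.sum_filter]
  apply Finset.sum_congr rfl
  intro S _
  by_cases h : p S <;> simp [h]

lemma colsum (hR : Reasonable A) (i : Fin n) (T : Finset (Fin n)) (hi : i ∉ T) :
    ∑ S ∈ univ.filter (fun S => T ⊆ S), A i S = 0 := by
  classical
  have hmono : MonotoneCF (fun S : Finset (Fin n) => if T ⊆ S then (1 : ℝ) else 0) := by
    intro S S' hss
    dsimp only
    by_cases h : T ⊆ S
    · rw [if_pos h, if_pos (h.trans hss)]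
    · rw [if_neg h]
      split <;> norm_num
  have hmarg : ∀ S : Finset (Fin n), i ∉ S →
      (if T ⊆ insert i S then (1 : ℝ) else 0) - (if T ⊆ S then 1 else 0) = 0 := by
    intro S _
    have hiff : T ⊆ insert i S ↔ T ⊆ S := by
      constructor
      · intro h x hx
        rcases Finset.mem_insert.1 (h hx) with h' | h'
        · exact absurd (h' ▸ hx) hi
        · exact h'
      · intro h
        exact h.trans (Finset.subset_insert i S)
    rw [if_congr hiff rfl rfl, sub_self]
  have := alloc_eq_const hR hmono i hmarg
  rwa [alloc_indicator] at this

lemma pair_sum (i : Fin n) {T : Finset (Fin n)} (hi : i ∉ T) (f : Finset (Fin n) → ℝ) :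
    ∑ S ∈ univ.filter (fun S => T ⊆ S), f S
      = ∑ S ∈ univ.filter (fun S => T ⊆ S ∧ i ∉ S), (f S + f (insert i S)) := by
  classical
  have hsplit : univ.filter (fun S : Finset (Fin n) => T ⊆ S)
      = (univ.filter (fun S => T ⊆ S ∧ i ∉ S)) ∪ (univ.filter (fun S => T ⊆ S ∧ i ∈ S)) := by
    ext S
    simp only [Finset.mem_filter, Finset.mem_union, Finset.mem_univ, true_and]
    tauto
  have hdisj : Disjoint (univ.filter (fun S : Finset (Fin n) => T ⊆ S ∧ i ∉ S))
      (univ.filter (fun S => T ⊆ S ∧ i ∈ S)) := by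
    rw [Finset.disjoint_left]
    intro S hS1 hS2
    simp only [Finset.mem_filter] at hS1 hS2
    exact hS1.2.2 hS2.2.2
  rw [hsplit, Finset.sum_union hdisj, Finset.sum_add_distrib]
  congr 1
  apply Finset.sum_nbij' (i := fun S => S.erase i) (j := fun S => insert i S)
  · intro S hS
    simp only [Finset.mem_filter, Finset.mem_univ, true_and] at hS ⊢
    refine ⟨fun x hx => Finset.mem_erase.2 ⟨fun hc => hi (hc ▸ hx), hS.1 hx⟩,
      Finset.notMem_erase i S⟩
  · intro S hS
    simp only [Finset.mem_filter, Finset.mem_univ, true_and] at hS ⊢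
    exact ⟨hS.1.trans (Finset.subset_insert i S), Finset.mem_insert_self i S⟩
  · intro S hS
    simp only [Finset.mem_filter, Finset.mem_univ, true_and] at hS
    exact Finset.insert_erase hS.2
  · intro S hS
    simp only [Finset.mem_filter, Finset.mem_univ, true_and] at hS
    exact Finset.erase_insert hS.2
  · intro S hS
    simp only [Finset.mem_filter, Finset.mem_univ, true_and] at hS
    rw [Finset.insert_erase hS.2]

lemma R1 (hR : Reasonable A) (i : Fin n) :
    ∀ S : Finset (Fin n), i ∉ S → A i S + A i (insert i S) = 0 := by
  classical
  have key : ∀ T : Finset (Fin n), i ∉ T →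
      ∑ S ∈ univ.filter (fun S => T ⊆ S ∧ i ∉ S), (A i S + A i (insert i S)) = 0 := by
    intro T hT
    rw [← pair_sum i hT]
    exact colsum hR i T hT
  suffices h : ∀ d : ℕ, ∀ S : Finset (Fin n), i ∉ S → n - S.card ≤ d →
      A i S + A i (insert i S) = 0 by
    intro S hS
    exact h n S hS (by omega)
  intro d
  induction d with
  | zero =>
    intro S hS hd
    exfalso
    have h1 : S.card ≤ n := by
      have := Finset.card_le_card (Finset.subset_univ S)
      rwa [Finset.card_univ, Fintype.card_fin] at this
    have h2 : S.card = n := by omega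
    have : S = univ := Finset.eq_univ_of_card S (by rw [h2, Fintype.card_fin])
    exact hS (this ▸ Finset.mem_univ i)
  | succ d ih =>
    intro S hS hd
    have hmem : S ∈ univ.filter (fun S' : Finset (Fin n) => S ⊆ S' ∧ i ∉ S') := by
      simp [hS]
    have hsum := key S hS
    rw [← Finset.add_sum_erase _ _ hmem] at hsum
    have hrest : ∑ S' ∈ (univ.filter (fun S' : Finset (Fin n) => S ⊆ S' ∧ i ∉ S')).erase S,
        (A i S' + A i (insert i S')) = 0 := by
      apply Finset.sum_eq_zero
      intro S' hS'
      rw [Finset.mem_erase, Finset.mem_filter] at hS'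
      have hlt : S.card < S'.card :=
        Finset.card_lt_card (Finset.ssubset_iff_subset_ne.2 ⟨hS'.2.2.1, Ne.symm hS'.1⟩)
      exact ih S' hS'.2.2.2 (by omega)
    rw [hrest, add_zero] at hsum
    exact hsum

lemma pA_nonneg_of_R (hR : Reasonable A) (i : Fin n) (S : Finset (Fin n)) (hi : i ∉ S) :
    0 ≤ pA A i S := by
  classical
  have hmono : MonotoneCF (fun T : Finset (Fin n) => if S ⊂ T then (1 : ℝ) else 0) := by
    intro T T' htt
    dsimp only
    by_cases h : S ⊂ T
    · rw [if_pos h, if_pos (h.trans_subset htt)]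
    · rw [if_neg h]
      split <;> norm_num
  have halloc : alloc A i (fun T : Finset (Fin n) => if S ⊂ T then (1 : ℝ) else 0)
      = - A i S := by
    rw [alloc_indicator]
    have hset : univ.filter (fun T : Finset (Fin n) => S ⊂ T)
        = (univ.filter (fun T => S ⊆ T)).erase S := by
      ext T
      simp only [Finset.mem_filter, Finset.mem_erase, Finset.mem_univ, true_and]
      rw [Finset.ssubset_iff_subset_ne]
      tauto
    rw [hset]
    have hmem : S ∈ univ.filter (fun T : Finset (Fin n) => S ⊆ T) := by simp
    have := Finset.add_sum_erase _ (A i) hmem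
    rw [colsum hR i S hi] at this
    linarith
  have hlow := (hR _ hmono i).1
  have hnn := margMin_nonneg hmono i
  rw [halloc] at hlow
  have hAiS : A i S ≤ 0 := by linarith
  have := R1 hR i S hi
  rw [pA]
  linarith

lemma columns (hE : Efficient A) (S : Finset (Fin n)) :
    ∑ i : Fin n, A i S = (if univ = S then (1 : ℝ) else 0) - (if ∅ = S then 1 else 0) := by
  classical
  have := hE (fun T => if T = S then (1 : ℝ) else 0)
  have halloc : ∀ i : Fin n, alloc A i (fun T => if T = S then (1 : ℝ) else 0) = A i S := by
    intro i
    rw [alloc]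
    have : ∀ T : Finset (Fin n), A i T * (if T = S then (1 : ℝ) else 0)
        = if T = S then A i T else 0 := by
      intro T; by_cases h : T = S <;> simp [h]
    rw [Finset.sum_congr rfl (fun T _ => this T), Finset.sum_ite_eq' univ S (A i)]
    simp
  rw [Finset.sum_congr rfl (fun i _ => halloc i)] at this
  rw [this]

lemma hcons_of_RE (hR : Reasonable A) (hE : Efficient A) :
    ∀ T : Finset (Fin n), T ≠ ∅ → ∑ i ∈ T, pA A i (T.erase i) = DDA A T := by
  classical
  intro T hT
  have hcol := columns hE T
  rw [← Finset.sum_add_sum_compl T (fun i => A i T)] at hcol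
  have h1 : ∀ i ∈ T, A i T = pA A i (T.erase i) := by
    intro i hi
    rw [pA, Finset.insert_erase hi]
  have h2 : ∀ i ∈ Tᶜ, A i T = - pA A i T := by
    intro i hi
    rw [Finset.mem_compl] at hi
    have := R1 hR i T hi
    rw [pA]
    linarith
  rw [Finset.sum_congr rfl h1, Finset.sum_congr rfl h2, Finset.sum_neg_distrib] at hcol
  have hFA : ∑ i ∈ Tᶜ, pA A i T = FA A T := rfl
  rw [hFA] at hcol
  have hemp : (if ∅ = T then (1:ℝ) else 0) = 0 := by
    rw [if_neg (fun hc => hT hc.symm)]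
  rw [hemp, sub_zero] at hcol
  by_cases hu : T = univ
  · subst hu
    have : FA A univ = 0 := by
      rw [FA, Finset.compl_univ, Finset.sum_empty]
    rw [this] at hcol
    rw [DDA, if_pos rfl]
    rw [if_pos rfl] at hcol
    linarith
  · rw [DDA, if_neg hu]
    rw [if_neg (fun hc => hu hc.symm)] at hcol
    linarith

lemma hF0_of_RE (hR : Reasonable A) (hE : Efficient A) (hn : 0 < n) : FA A ∅ = 1 := by
  classical
  have hcol := columns hE ∅
  have h2 : ∀ i ∈ (univ : Finset (Fin n)), A i ∅ = - pA A i ∅ := by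
    intro i _
    have := R1 hR i ∅ (by simp)
    rw [pA]
    linarith
  rw [Finset.sum_congr rfl h2, Finset.sum_neg_distrib] at hcol
  have huniv : (if univ = (∅ : Finset (Fin n)) then (1:ℝ) else 0) = 0 := by
    rw [if_neg]
    intro hc
    have := congrArg Finset.card hc
    rw [Finset.card_univ, Fintype.card_fin] at this
    simp at this
    omega
  rw [huniv, if_pos rfl, zero_sub] at hcol
  have : FA A ∅ = ∑ i : Fin n, pA A i ∅ := by
    rw [FA, Finset.compl_empty]
  rw [this]
  linarith

end games

/-! ### Properties of the special allocations -/

lemma lt_filter_eq (σ : Equiv.Perm (Fin n)) (i : Fin n) :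
    univ.filter (fun j => σ j < σ i) = CmS σ ((σ i : ℕ)) := by
  ext j
  simp only [Finset.mem_filter, Finset.mem_univ, true_and, mem_CmS, Fin.lt_def]

lemma le_filter_eq (σ : Equiv.Perm (Fin n)) (i : Fin n) :
    univ.filter (fun j => σ j ≤ σ i) = insert i (univ.filter (fun j => σ j < σ i)) := by
  ext j
  simp only [Finset.mem_filter, Finset.mem_insert, Finset.mem_univ, true_and]
  constructor
  · intro h
    rcases lt_or_eq_of_le h with h' | h'
    · right; exact h'
    · left; exact σ.injective h'
  · rintro (rfl | h)
    · exact le_rfl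
    · exact le_of_lt h

lemma i_notMem_ltfilter (σ : Equiv.Perm (Fin n)) (i : Fin n) :
    i ∉ univ.filter (fun j => σ j < σ i) := by simp

lemma alloc_specialA (σ : Equiv.Perm (Fin n)) (i : Fin n) (v : Finset (Fin n) → ℝ) :
    alloc (specialA σ) i v
      = v (univ.filter (fun j => σ j ≤ σ i)) - v (univ.filter (fun j => σ j < σ i)) := by
  rw [alloc]
  have hterm : ∀ S : Finset (Fin n), specialA σ i S * v S
      = (if S = univ.filter (fun j => σ j ≤ σ i) then v S else 0)
        - (if S = univ.filter (fun j => σ j < σ i) then v S else 0) := by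
    intro S
    rw [specialA, sub_mul, ite_mul, one_mul, zero_mul, ite_mul, one_mul, zero_mul]
  rw [Finset.sum_congr rfl (fun S _ => hterm S), Finset.sum_sub_distrib,
    Finset.sum_ite_eq' univ _ v, Finset.sum_ite_eq' univ _ v]
  simp

lemma special_efficient (σ : Equiv.Perm (Fin n)) : Efficient (specialA σ) := by
  intro v
  have h1 : ∀ i : Fin n, alloc (specialA σ) i v
      = v (CmS σ ((σ i : ℕ) + 1)) - v (CmS σ ((σ i : ℕ))) := by
    intro i
    rw [alloc_specialA, lt_filter_eq]
    congr 2
    ext j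
    simp only [Finset.mem_filter, Finset.mem_univ, true_and, mem_CmS, Fin.le_def]
    omega
  rw [Finset.sum_congr rfl (fun i _ => h1 i)]
  have h2 := Equiv.sum_comp σ
    (fun x : Fin n => v (CmS σ ((x : ℕ) + 1)) - v (CmS σ ((x : ℕ))))
  rw [h2, Fin.sum_univ_eq_sum_range (fun m => v (CmS σ (m + 1)) - v (CmS σ m)) n,
    Finset.sum_range_sub (fun m => v (CmS σ m)) n, CmS_univ, CmS_zero]

lemma special_reasonable (σ : Equiv.Perm (Fin n)) : Reasonable (specialA σ) := by
  intro v hv i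
  rw [alloc_specialA, le_filter_eq]
  have hmem : v (insert i (univ.filter (fun j => σ j < σ i)))
      - v (univ.filter (fun j => σ j < σ i))
      ∈ ((univ.filter (fun S : Finset (Fin n) => i ∉ S)).image
        (fun S => v (insert i S) - v S)) := by
    rw [Finset.mem_image]
    exact ⟨univ.filter (fun j => σ j < σ i), by simp, rfl⟩
  constructor
  · rw [margMin]
    exact Finset.min'_le _ _ hmem
  · rw [margMax]
    exact Finset.le_max' _ _ hmem

/-! ### The representation of a reasonable efficient allocation -/

section repr

variable {A : Fin n → Finset (Fin n) → ℝ}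

lemma cond_lt_iff {i : Fin n} {T : Finset (Fin n)} (hi : i ∉ T) (σ : Equiv.Perm (Fin n)) :
    (univ.filter (fun j => σ j < σ i) = T) ↔ (CmS σ T.card = T ∧ (σ i : ℕ) = T.card) := by
  rw [lt_filter_eq]
  constructor
  · intro h
    have hval : (σ i : ℕ) = T.card := by
      have := card_CmS σ ((σ i : ℕ)) (le_of_lt (σ i).isLt)
      rw [h] at this
      omega
    refine ⟨?_, hval⟩
    rw [← hval]
    exact h
  · rintro ⟨h1, h2⟩
    rw [h2]
    exact h1

lemma prefP_nonneg (hp : ∀ (i : Fin n) (S : Finset (Fin n)), i ∉ S → 0 ≤ pA A i S)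
    (σ : Equiv.Perm (Fin n)) : 0 ≤ prefP A σ n := by
  apply Finset.prod_nonneg
  intro m _
  rw [stepw]
  split
  · next h => exact wA_nonneg hp _ _ (symm_notMem_CmS σ h)
  · norm_num

lemma repr_eq (hR : Reasonable A) (hE : Efficient A) (hn : 0 < n) :
    A = ∑ σ ∈ (univ : Finset (Equiv.Perm (Fin n))), prefP A σ n • specialA σ := by
  classical
  have hp := fun i S hi => pA_nonneg_of_R hR i S hi
  have hcons := hcons_of_RE hR hE
  have hF0 := hF0_of_RE hR hE hn
  funext i T
  have happ : (∑ σ ∈ (univ : Finset (Equiv.Perm (Fin n))), prefP A σ n • specialA σ) i T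
      = ∑ σ ∈ (univ : Finset (Equiv.Perm (Fin n))), prefP A σ n * specialA σ i T := by
    rw [Finset.sum_apply, Finset.sum_apply]
    apply Finset.sum_congr rfl
    intro σ _
    rw [Pi.smul_apply, Pi.smul_apply, smul_eq_mul]
  rw [happ]
  have hsplit : ∀ σ : Equiv.Perm (Fin n), prefP A σ n * specialA σ i T
      = (if T = univ.filter (fun j => σ j ≤ σ i) then prefP A σ n else 0)
        - (if T = univ.filter (fun j => σ j < σ i) then prefP A σ n else 0) := by
    intro σ
    rw [specialA, mul_sub, mul_ite, mul_one, mul_zero, mul_ite, mul_one, mul_zero]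
  rw [Finset.sum_congr rfl (fun σ _ => hsplit σ), Finset.sum_sub_distrib,
    ← Finset.sum_filter, ← Finset.sum_filter]
  by_cases hiT : i ∈ T
  · -- second sum empty, first sum = pA A i (T.erase i) = A i T
    have h2 : univ.filter
        (fun σ : Equiv.Perm (Fin n) => T = univ.filter (fun j => σ j < σ i)) = ∅ := by
      apply Finset.filter_eq_empty_iff.2
      intro σ _ hc
      have := hc ▸ hiT
      simp at this
    have hiE : i ∉ T.erase i := Finset.notMem_erase i T
    have hcard : (T.erase i).card < n := by
      have h1 : T.card ≤ n := by
        have := Finset.card_le_card (Finset.subset_univ T)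
        rwa [Finset.card_univ, Fintype.card_fin] at this
      have := Finset.card_erase_of_mem hiT
      have hT0 : 0 < T.card := Finset.card_pos.2 ⟨i, hiT⟩
      omega
    have hcond : ∀ σ : Equiv.Perm (Fin n),
        (univ.filter (fun j => σ j ≤ σ i) = T)
          ↔ (CmS σ (T.erase i).card = T.erase i ∧ (σ i : ℕ) = (T.erase i).card) := by
      intro σ
      rw [← cond_lt_iff hiE σ, le_filter_eq]
      constructor
      · intro h
        calc univ.filter (fun j => σ j < σ i)
            = (insert i (univ.filter (fun j => σ j < σ i))).erase i :=
              (Finset.erase_insert (i_notMem_ltfilter σ i)).symm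
          _ = T.erase i := by rw [h]
      · intro h
        rw [h, Finset.insert_erase hiT]
    have hset1 : univ.filter
        (fun σ : Equiv.Perm (Fin n) => T = univ.filter (fun j => σ j ≤ σ i))
        = univ.filter (fun σ : Equiv.Perm (Fin n) =>
            CmS σ (T.erase i).card = T.erase i ∧ (σ i : ℕ) = (T.erase i).card) := by
      apply Finset.filter_congr
      intro σ _
      exact eq_comm.trans (hcond σ)
    rw [h2, hset1, Finset.sum_empty, sub_zero,
      eta hp hcons hF0 hn hcard rfl hiE, pA, Finset.insert_erase hiT]
  · -- first sum empty, second sum = pA A i T, and A i T = - pA A i T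
    have h1 : univ.filter
        (fun σ : Equiv.Perm (Fin n) => T = univ.filter (fun j => σ j ≤ σ i)) = ∅ := by
      apply Finset.filter_eq_empty_iff.2
      intro σ _ hc
      apply hiT
      rw [hc]
      simp
    have hcard : T.card < n := by
      have h1' : T.card ≤ n := by
        have := Finset.card_le_card (Finset.subset_univ T)
        rwa [Finset.card_univ, Fintype.card_fin] at this
      rcases eq_or_lt_of_le h1' with he | hl
      · exfalso
        exact hiT ((Finset.eq_univ_of_card T (by rw [he, Fintype.card_fin])) ▸ Finset.mem_univ i)
      · exact hl
    have hset2 : univ.filter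
        (fun σ : Equiv.Perm (Fin n) => T = univ.filter (fun j => σ j < σ i))
        = univ.filter (fun σ : Equiv.Perm (Fin n) =>
            CmS σ T.card = T ∧ (σ i : ℕ) = T.card) := by
      apply Finset.filter_congr
      intro σ _
      exact eq_comm.trans (cond_lt_iff hiT σ)
    rw [h1, hset2, Finset.sum_empty, zero_sub,
      eta hp hcons hF0 hn hcard rfl hiT]
    have := R1 hR i T hiT
    rw [pA]
    linarith

end repr

/-! ### Convexity of the target set -/

lemma alloc_combo (B C : Fin n → Finset (Fin n) → ℝ) (a b : ℝ) (i : Fin n)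
    (v : Finset (Fin n) → ℝ) :
    alloc (a • B + b • C) i v = a * alloc B i v + b * alloc C i v := by
  rw [alloc, alloc, alloc, Finset.mul_sum, Finset.mul_sum, ← Finset.sum_add_distrib]
  apply Finset.sum_congr rfl
  intro S _
  have : (a • B + b • C) i S = a * B i S + b * C i S := by
    rw [Pi.add_apply, Pi.add_apply, Pi.smul_apply, Pi.smul_apply, Pi.smul_apply,
      Pi.smul_apply, smul_eq_mul, smul_eq_mul]
  rw [this]
  ring

lemma convex_RE :
    Convex ℝ {B : Fin n → Finset (Fin n) → ℝ | Reasonable B ∧ Efficient B} := by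
  rintro B ⟨hBr, hBe⟩ C ⟨hCr, hCe⟩ a b ha hb hab
  constructor
  · intro v hv i
    obtain ⟨h1, h2⟩ := hBr v hv i
    obtain ⟨h3, h4⟩ := hCr v hv i
    rw [alloc_combo]
    have e1 := mul_le_mul_of_nonneg_left h1 ha
    have e2 := mul_le_mul_of_nonneg_left h2 ha
    have e3 := mul_le_mul_of_nonneg_left h3 hb
    have e4 := mul_le_mul_of_nonneg_left h4 hb
    have hmm : margMin i v = a * margMin i v + b * margMin i v := by
      rw [← add_mul, hab, one_mul]
    have hmx : margMax i v = a * margMax i v + b * margMax i v := by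
      rw [← add_mul, hab, one_mul]
    constructor
    · rw [hmm]; linarith
    · rw [hmx]; linarith
  · intro v
    have : ∀ i : Fin n, alloc (a • B + b • C) i v = a * alloc B i v + b * alloc C i v :=
      fun i => alloc_combo B C a b i v
    rw [Finset.sum_congr rfl (fun i _ => this i), Finset.sum_add_distrib,
      ← Finset.mul_sum, ← Finset.mul_sum, hBe v, hCe v, ← add_mul, hab, one_mul]

end REaux

/-- an allocation is reasonable and efficient iff it lies in the
convex hull of the special allocations. -/
theorem reasonable_efficient_iff_convexHull {n : ℕ}
    (A : Fin n → Finset (Fin n) → ℝ) :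
    (Reasonable A ∧ Efficient A) ↔
      A ∈ convexHull ℝ {B : Fin n → Finset (Fin n) → ℝ |
        ∃ σ : Equiv.Perm (Fin n), B = specialA σ} := by
  constructor
  · rintro ⟨hR, hE⟩
    rcases Nat.eq_zero_or_pos n with hn | hn
    · subst hn
      apply subset_convexHull
      exact ⟨1, by funext i; exact i.elim0⟩
    · have hp := fun i S hi => REaux.pA_nonneg_of_R hR i S hi
      have hcons := REaux.hcons_of_RE hR hE
      have hF0 := REaux.hF0_of_RE hR hE hn
      have hw : ∀ σ ∈ (univ : Finset (Equiv.Perm (Fin n))), 0 ≤ REaux.prefP A σ n :=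
        fun σ _ => REaux.prefP_nonneg hp σ
      have htot : ∑ σ ∈ (univ : Finset (Equiv.Perm (Fin n))), REaux.prefP A σ n = 1 :=
        REaux.total_mass hp hcons hF0 hn
      have hz : ∀ σ ∈ (univ : Finset (Equiv.Perm (Fin n))),
          specialA σ ∈ {B : Fin n → Finset (Fin n) → ℝ |
            ∃ σ' : Equiv.Perm (Fin n), B = specialA σ'} :=
        fun σ _ => ⟨σ, rfl⟩
      have hmem := Finset.centerMass_mem_convexHull univ hw (by rw [htot]; norm_num) hz
      rw [Finset.centerMass_eq_of_sum_1 _ _ htot] at hmem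
      rw [REaux.repr_eq hR hE hn]
      exact hmem
  · intro hA
    have hsub : {B : Fin n → Finset (Fin n) → ℝ | ∃ σ : Equiv.Perm (Fin n), B = specialA σ}
        ⊆ {B : Fin n → Finset (Fin n) → ℝ | Reasonable B ∧ Efficient B} := by
      rintro B ⟨σ, rfl⟩
      exact ⟨REaux.special_reasonable σ, REaux.special_efficient σ⟩
    exact convexHull_min hsub REaux.convex_RE hA
end
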